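/- arXiv:2504.20787 — 5 statements merged into one kernel-verified Lean document; each statement's English description precedes it below -/
import Mathlib

section
/- Let G be a finite 2-group such that G/G' has rank 3. Suppose H₁, H₂, H₃ are three pairwise distinct maximal subgroups of G with H₁ ∩ H₂ ⊆ H₃ and such that H₁' = H₂' = H₃' = G'. Then G' = 1, i.e. G is abelian (and in particular H' = G' for every subgroup H of G). -/
/-!
Induct on `|G|`. If `G' ≠ 1`, choose a central involution `z ∈ G'`; the hypotheses pass to
`G / ⟨z⟩`, so by induction `G' = ⟨z⟩` is central of exponent 2. Then commutation is
bimultiplicative and squares are central, so `Φ = ⟨x² | x ∈ G⟩` is central and `G / Φ` is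
elementary abelian of order at most `8`. As `K = H₁ ∩ H₂` has index `4` and contains `Φ`, we get
`K = ⟨c⟩Φ`, and with `a ∈ H₁ \ H₂`, `b ∈ H₂ \ H₁` also `H₁ = ⟨a, c⟩Φ`, `H₂ = ⟨b, c⟩Φ`,
`H₃ = ⟨ab, c⟩Φ`. So `G'` is generated by each of `[a, c]`, `[b, c]` and
`[ab, c] = [a, c][b, c]`, which forces `[a, c] = [a, c]² = 1`.
-/

open Subgroup
open scoped commutatorElement

theorem card_le_two_pow_rank_of_sq_eq_one {E : Type*} [Group E] [Group.FG E]
    (hE : ∀ x : E, x ^ 2 = 1) : Nat.card E ≤ 2 ^ Group.rank E := by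
  let _ : CommGroup E :=
    { mul_comm := Commute.of_orderOf_dvd_two fun g => orderOf_dvd_of_pow_eq_one (hE g) }
  obtain ⟨S, hScard, hS⟩ := Group.rank_spec E
  have hsurj : Function.Surjective fun v : S → ZMod 2 => ∏ s : S, (s : E) ^ (v s).val := by
    intro x
    obtain ⟨a, rfl⟩ := mem_closure_iff_of_fintype.1 (hS ▸ mem_top x)
    refine ⟨fun s => a s, Finset.prod_congr rfl fun s _ => ?_⟩
    rw [← zpow_natCast, ZMod.val_intCast, ← zpow_eq_zpow_emod' _ (hE s)]
  calc Nat.card E ≤ Nat.card (S → ZMod 2) := Nat.card_le_card_of_surjective _ hsurj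
    _ = 2 ^ Group.rank E := by simp [Nat.card_fun, hScard]

theorem eq_one_or_eq_of_mem_zpowers {G : Type*} [Group G] {w x : G} (hw : w ^ 2 = 1)
    (hx : x ∈ zpowers w) : x = 1 ∨ x = w := by
  obtain ⟨n, rfl⟩ := hx
  dsimp only
  rw [zpow_eq_zpow_emod' n hw]
  rcases Int.emod_two_eq_zero_or_one n with h | h <;> simp [h]

section ClassTwo

variable {G : Type*} [Group G]

theorem commutatorElement_mul_left_of_le_center (hG : commutator G ≤ center G) (a b c : G) :
    ⁅a * b, c⁆ = ⁅a, c⁆ * ⁅b, c⁆ := by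
  have hcen : ∀ x y : G, ⁅x, y⁆ ∈ center G := fun x y =>
    hG (commutator_mem_commutator (mem_top x) (mem_top y))
  rw [commutatorElement_mul_left_eq_conj_mul, mem_center_iff.1 (hcen b c) a,
    mul_inv_cancel_right, mem_center_iff.1 (hcen b c)]

theorem commutator_closure_le_of_le_center (hG : commutator G ≤ center G) {S : Set G}
    {N : Subgroup G} (hS : ∀ x ∈ S, ∀ y ∈ S, ⁅x, y⁆ ∈ N) : ⁅closure S, closure S⁆ ≤ N := by
  -- `g ↦ ⁅g, c⁆` is a homomorphism, so `{g | ⁅g, c⁆ ∈ N}` is a subgroup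
  have hom : ∀ c : G, ∀ T : Set G, (∀ x ∈ T, ⁅x, c⁆ ∈ N) → ∀ g ∈ closure T, ⁅g, c⁆ ∈ N :=
    fun c T hT => (closure_le (N.comap (MonoidHom.mk' (⁅·, c⁆)
      fun a b => commutatorElement_mul_left_of_le_center hG a b c))).2 hT
  have hS' : ∀ g ∈ closure S, ∀ y ∈ S, ⁅y, g⁆ ∈ N := fun g hg y hy => by
    rw [← commutatorElement_inv]
    exact inv_mem (hom y S (fun x hx => hS x hx y hy) g hg)
  rw [commutator_le]
  intro g hg h hh
  rw [← commutatorElement_inv]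
  exact inv_mem (hom g S (hS' g hg) h hh)

theorem commutator_closure_insert_insert_le (hG : commutator G ≤ center G) {x c : G} {Z : Set G}
    (hZ : Z ⊆ center G) :
    ⁅closure (insert x (insert c Z)), closure (insert x (insert c Z))⁆ ≤ zpowers ⁅x, c⁆ := by
  have hZl : ∀ z ∈ Z, ∀ g : G, ⁅z, g⁆ = 1 := fun z hz g =>
    commutatorElement_eq_one_iff_commute.2 (mem_center_iff.1 (hZ hz) g).symm
  have hZr : ∀ z ∈ Z, ∀ g : G, ⁅g, z⁆ = 1 := fun z hz g =>
    commutatorElement_eq_one_iff_commute.2 (mem_center_iff.1 (hZ hz) g)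
  have hcx : ⁅c, x⁆ ∈ zpowers ⁅x, c⁆ := by
    simpa only [commutatorElement_inv] using inv_mem (mem_zpowers ⁅x, c⁆)
  apply commutator_closure_le_of_le_center hG
  intro u hu v hv
  rcases hu with hu | hu | hu <;> rcases hv with hv | hv | hv <;> (try subst u) <;> (try subst v)
  all_goals first
    | exact mem_zpowers _
    | exact hcx
    | rw [commutatorElement_self]; exact one_mem _
    | rw [hZl u hu]; exact one_mem _
    | rw [hZr v hv]; exact one_mem _

theorem sq_mem_center_of_le_center (hG : commutator G ≤ center G)
    (hexp : ∀ g ∈ commutator G, g ^ 2 = 1) (x : G) : x ^ 2 ∈ center G := by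
  rw [mem_center_iff]
  intro g
  have h : ⁅x ^ 2, g⁆ = 1 := by
    rw [pow_two, commutatorElement_mul_left_of_le_center hG, ← pow_two,
      hexp _ (commutator_mem_commutator (mem_top x) (mem_top g))]
  exact (commutatorElement_eq_one_iff_commute.1 h).eq.symm

end ClassTwo

/-- For a finite 2-group this is the Frattini subgroup. -/
abbrev squareSubgroup (G : Type*) [Group G] : Subgroup G :=
  closure (Set.range fun x : G => x ^ 2)

namespace Subgroup

variable {G : Type*} [Group G]

theorem eq_of_le_of_index_eq {H K : Subgroup G} (hle : H ≤ K) (h : H.index = K.index)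
    (h0 : H.index ≠ 0) : H = K := by
  have := relIndex_mul_index hle
  rw [← h, mul_eq_right₀ h0, relIndex_eq_one] at this
  exact le_antisymm hle this

theorem relIndex_inf_eq_two {H₁ H₂ : Subgroup G} (hi₁ : H₁.index = 2) (hi₂ : H₂.index = 2)
    (h12 : H₁ ≠ H₂) : (H₁ ⊓ H₂).relIndex H₁ = 2 := by
  have := normal_of_index_eq_two hi₂
  rw [inf_relIndex_left]
  have hdvd : H₂.relIndex H₁ ∣ 2 := hi₂ ▸ relIndex_dvd_index_of_normal H₂ H₁
  have hne : H₂.relIndex H₁ ≠ 1 := fun h =>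
    h12 (eq_of_le_of_index_eq (relIndex_eq_one.1 h) (hi₁.trans hi₂.symm) (by omega))
  rcases (Nat.dvd_prime Nat.prime_two).1 hdvd with h | h
  · exact absurd h hne
  · exact h

theorem le_closure_insert_of_relIndex_eq_two {H K : Subgroup G} {a : G} (h : H.relIndex K = 2)
    (ha : a ∈ K) (haH : a ∉ H) : K ≤ closure (insert a (H : Set G)) := by
  intro b hb
  have hmem : a⁻¹ * b ∈ H ∨ b ∈ H := by
    have := mul_mem_iff_of_index_two h (a := ⟨a, ha⟩⁻¹) (b := ⟨b, hb⟩)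
    simp only [mem_subgroupOf, coe_mul, coe_inv, inv_mem_iff] at this
    tauto
  rcases hmem with h' | h'
  · rw [← mul_inv_cancel_left a b]
    exact mul_mem (subset_closure (Set.mem_insert a _))
      (subset_closure (Set.mem_insert_of_mem a h'))
  · exact subset_closure (Set.mem_insert_of_mem a h')

theorem mul_mem_of_index_eq_two {H₁ H₂ H₃ : Subgroup G} (h13 : H₁ ≠ H₃) (h23 : H₂ ≠ H₃)
    (hi₁ : H₁.index = 2) (hi₂ : H₂.index = 2) (hi₃ : H₃.index = 2) (hint : H₁ ⊓ H₂ ≤ H₃)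
    {a b : G} (ha₁ : a ∈ H₁) (ha₂ : a ∉ H₂) (hb₂ : b ∈ H₂) (hb₁ : b ∉ H₁) : a * b ∈ H₃ := by
  have h12 : H₁ ≠ H₂ := fun h => ha₂ (h ▸ ha₁)
  have ha₃ : a ∉ H₃ := fun ha₃ => h13 <| eq_of_le_of_index_eq
    ((le_closure_insert_of_relIndex_eq_two (relIndex_inf_eq_two hi₁ hi₂ h12) ha₁
      fun h => ha₂ h.2).trans ((closure_le _).2 (Set.insert_subset ha₃ hint)))
    (hi₁.trans hi₃.symm) (by omega)
  have hb₃ : b ∉ H₃ := fun hb₃ => h23 <| eq_of_le_of_index_eq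
    ((le_closure_insert_of_relIndex_eq_two (relIndex_inf_eq_two hi₂ hi₁ h12.symm) hb₂
      fun h => hb₁ h.2).trans ((closure_le _).2 (Set.insert_subset hb₃ (inf_comm H₂ H₁ ▸ hint))))
    (hi₂.trans hi₃.symm) (by omega)
  exact (mul_mem_iff_of_index_two hi₃).2 (iff_of_false ha₃ hb₃)

theorem map_inf_map_le_map {Q : Type*} [Group Q] {f : G →* Q} {H₁ H₂ H₃ : Subgroup G}
    (h₂ : f.ker ≤ H₂) (h : H₁ ⊓ H₂ ≤ H₃) : H₁.map f ⊓ H₂.map f ≤ H₃.map f := by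
  intro y hy
  obtain ⟨⟨x, hx₁, rfl⟩, hx₂⟩ := mem_inf.1 hy
  rw [← mem_comap, comap_map_eq_self h₂] at hx₂
  exact mem_map_of_mem f (h ⟨hx₁, hx₂⟩)

end Subgroup

theorem squareSubgroup_le_of_index_eq_two {G : Type*} [Group G] {H : Subgroup G}
    (hH : H.index = 2) : squareSubgroup G ≤ H :=
  closure_le H |>.2 <| Set.range_subset_iff.2 (sq_mem_of_index_two hH)

theorem commutator_le_squareSubgroup (G : Type*) [Group G] :
    commutator G ≤ squareSubgroup G := by
  rw [commutator_def, commutator_le]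
  intro x _ y _
  have hsq : ∀ g : G, g ^ 2 ∈ squareSubgroup G := fun g => subset_closure ⟨g, rfl⟩
  have : ⁅x, y⁆ = x ^ 2 * (x⁻¹ * y) ^ 2 * y⁻¹ ^ 2 := by
    simp only [commutatorElement_def, pow_two, mul_assoc, mul_inv_cancel_left]
  rw [this]
  exact mul_mem (mul_mem (hsq _) (hsq _)) (hsq _)

theorem commutator_le_of_index_eq_two {G : Type*} [Group G] {H : Subgroup G} (hH : H.index = 2) :
    commutator G ≤ H :=
  (commutator_le_squareSubgroup G).trans (squareSubgroup_le_of_index_eq_two hH)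

theorem index_squareSubgroup_le (G : Type*) [Group G] [Group.FG G] :
    (squareSubgroup G).index ≤ 2 ^ Group.rank (G ⧸ commutator G) := by
  have hG : commutator G ≤ squareSubgroup G := commutator_le_squareSubgroup G
  have := Normal.of_commutator_le (G := G) hG
  rw [index_eq_card]
  refine (card_le_two_pow_rank_of_sq_eq_one ?_).trans
    (Nat.pow_le_pow_right two_pos (Group.rank_le_of_surjective
      (QuotientGroup.map _ _ (MonoidHom.id G) hG) ?_))
  · rintro ⟨x⟩
    exact (QuotientGroup.eq_one_iff _).2 (subset_closure ⟨x, rfl⟩)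
  · rintro ⟨x⟩
    exact ⟨x, rfl⟩

theorem exists_le_closure_insert_squareSubgroup {G : Type*} [Group G] [Finite G]
    (hrank : Group.rank (G ⧸ commutator G) ≤ 3) {K : Subgroup G} (hK : K.index = 4)
    (hΦK : squareSubgroup G ≤ K) :
    ∃ c ∈ K, K ≤ closure (insert c (squareSubgroup G : Set G)) := by
  set Φ := squareSubgroup G
  by_cases hKΦ : K ≤ Φ
  · exact ⟨1, one_mem K, fun y hy => subset_closure (Set.mem_insert_of_mem 1 (hKΦ hy))⟩
  obtain ⟨c, hcK, hcΦ⟩ := SetLike.not_le_iff_exists.1 hKΦ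
  refine ⟨c, hcK, le_closure_insert_of_relIndex_eq_two ?_ hcK hcΦ⟩
  have hΦi : Φ.index ≤ 8 := (index_squareSubgroup_le G).trans (Nat.pow_le_pow_right two_pos hrank)
  have := relIndex_mul_index hΦK
  have := mt relIndex_eq_one.1 hKΦ
  have : Φ.index ≠ 0 := index_ne_zero_of_finite
  rw [hK] at *
  omega

theorem commutator_eq_bot_of_le_center {G : Type*} [Group G] [Finite G]
    (hrank : Group.rank (G ⧸ commutator G) ≤ 3) (hG : commutator G ≤ center G)
    (hexp : ∀ g ∈ commutator G, g ^ 2 = 1)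
    {H₁ H₂ H₃ : Subgroup G} (h12 : H₁ ≠ H₂) (h13 : H₁ ≠ H₃) (h23 : H₂ ≠ H₃)
    (hi₁ : H₁.index = 2) (hi₂ : H₂.index = 2) (hi₃ : H₃.index = 2) (hint : H₁ ⊓ H₂ ≤ H₃)
    (hc₁ : ⁅H₁, H₁⁆ = commutator G) (hc₂ : ⁅H₂, H₂⁆ = commutator G)
    (hc₃ : ⁅H₃, H₃⁆ = commutator G) : commutator G = ⊥ := by
  set Φ := squareSubgroup G
  set K := H₁ ⊓ H₂
  have hK₁ : K.relIndex H₁ = 2 := relIndex_inf_eq_two hi₁ hi₂ h12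
  have hK₂ : K.relIndex H₂ = 2 := by
    rw [show K = H₂ ⊓ H₁ from inf_comm _ _]; exact relIndex_inf_eq_two hi₂ hi₁ h12.symm
  have hKi : K.index = 4 := by rw [← relIndex_mul_index inf_le_left, hK₁, hi₁]
  have hK₃ : K.relIndex H₃ = 2 := by
    have := relIndex_mul_index hint; rw [hi₃, hKi] at this; omega
  obtain ⟨c, -, hKc⟩ := exists_le_closure_insert_squareSubgroup hrank hKi
    (le_inf (squareSubgroup_le_of_index_eq_two hi₁) (squareSubgroup_le_of_index_eq_two hi₂))
  have hΦcen : (Φ : Set G) ⊆ center G :=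
    (closure_le _).2 (Set.range_subset_iff.2 (sq_mem_center_of_le_center hG hexp))
  -- `H = ⟨x, c⟩Φ` with `Φ` central
  have hbound : ∀ {H : Subgroup G} {x : G}, K.relIndex H = 2 → x ∈ H → x ∉ K →
      ⁅H, H⁆ ≤ zpowers ⁅x, c⁆ := by
    intro H x hKH hx hxK
    have hH : H ≤ closure (insert x (insert c (Φ : Set G))) :=
      (le_closure_insert_of_relIndex_eq_two hKH hx hxK).trans <| (closure_le _).2 <|
        Set.insert_subset_iff.2 ⟨subset_closure (Set.mem_insert _ _),
          hKc.trans (closure_mono (Set.subset_insert _ _))⟩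
    exact (commutator_mono hH hH).trans (commutator_closure_insert_insert_le hG hΦcen)
  obtain ⟨a, ha₁, ha₂⟩ := SetLike.not_le_iff_exists.1 fun h =>
    h12 (eq_of_le_of_index_eq h (hi₁.trans hi₂.symm) (by omega))
  obtain ⟨b, hb₂, hb₁⟩ := SetLike.not_le_iff_exists.1 fun h =>
    h12 (eq_of_le_of_index_eq h (hi₂.trans hi₁.symm) (by omega)).symm
  have hab₁ : a * b ∉ H₁ := fun h => hb₁ (by simpa using mul_mem (inv_mem ha₁) h)
  have hA := hc₁ ▸ hbound hK₁ ha₁ fun h => ha₂ h.2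
  have hB := hc₂ ▸ hbound hK₂ hb₂ fun h => hb₁ h.1
  have hAB := hc₃ ▸ hbound hK₃ (mul_mem_of_index_eq_two h13 h23 hi₁ hi₂ hi₃ hint ha₁ ha₂ hb₂ hb₁)
    fun h => hab₁ h.1
  rw [commutatorElement_mul_left_of_le_center hG] at hAB
  have hsq : ∀ x y : G, ⁅x, y⁆ ^ 2 = 1 := fun x y =>
    hexp _ (commutator_mem_commutator (mem_top x) (mem_top y))
  refine eq_bot_iff.2 fun z hz => by_contra fun hz1 => hz1 ?_
  have hza := (eq_one_or_eq_of_mem_zpowers (hsq a c) (hA hz)).resolve_left hz1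
  have hzb := (eq_one_or_eq_of_mem_zpowers (hsq b c) (hB hz)).resolve_left hz1
  have hzab := (eq_one_or_eq_of_mem_zpowers (hexp _ (mul_mem (hza ▸ hz) (hzb ▸ hz)))
    (hAB hz)).resolve_left hz1
  rwa [← hza, ← hzb, left_eq_mul] at hzab

theorem map_commutator_of_surjective {G Q : Type*} [Group G] [Group Q] {f : G →* Q}
    (hf : Function.Surjective f) : (commutator G).map f = commutator Q := by
  rw [map_commutator_eq, MonoidHom.range_eq_top.2 hf, _root_.commutator_def]

theorem rank_quotient_commutator_quotient {G : Type*} [Group G] [Group.FG G] {N : Subgroup G}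
    [N.Normal] (hN : N ≤ commutator G) :
    Group.rank ((G ⧸ N) ⧸ commutator (G ⧸ N)) = Group.rank (G ⧸ commutator G) := by
  have := map_commutator_of_surjective (QuotientGroup.mk'_surjective N)
  rw [Group.rank_congr (QuotientGroup.quotientMulEquivOfEq this.symm),
    Group.rank_congr (QuotientGroup.quotientQuotientEquivQuotient N _ hN)]

theorem IsPGroup.index_eq_of_isCoatom {p : ℕ} [Fact p.Prime] {G : Type*} [Group G] [Finite G]
    (hG : IsPGroup p G) {H : Subgroup G} (hH : IsCoatom H) : H.index = p := by
  obtain ⟨n, hn⟩ := (hG.to_subgroup H).exists_card_eq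
  obtain ⟨k, hk⟩ := hG.index H
  have hk0 : k ≠ 0 := by
    rintro rfl
    exact hH.1 (index_eq_one.1 (by rwa [pow_zero] at hk))
  have hcard := H.card_mul_index
  rw [hn, hk] at hcard
  have hdvd : p ^ (n + 1) ∣ Nat.card G := by
    rw [← hcard, pow_succ]; exact mul_dvd_mul_left _ (dvd_pow_self p hk0)
  obtain ⟨K, hK, hHK⟩ := Sylow.exists_subgroup_card_pow_succ hdvd hn
  have hp : p.Prime := Fact.out
  have hKtop : K = ⊤ := hH.2 K <| lt_of_le_of_ne hHK fun h => by
    rw [← h, hn] at hK; exact (Nat.pow_lt_pow_succ hp.one_lt).ne hK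
  rw [hKtop, card_top, ← hcard, pow_succ] at hK
  rw [hk]
  exact mul_left_cancel₀ (pow_ne_zero n hp.ne_zero) hK

theorem IsPGroup.exists_mem_inf_center_orderOf_eq {p : ℕ} [Fact p.Prime] {G : Type*} [Group G]
    [Finite G] (hG : IsPGroup p G) {N : Subgroup G} [N.Normal] (hN : N ≠ ⊥) :
    ∃ z ∈ N ⊓ center G, orderOf z = p := by
  have hdvd : ∀ {L : Subgroup G}, L ≠ ⊥ → p ∣ Nat.card L := fun {L} hL => by
    obtain ⟨n, hn0, hn⟩ := (hG.to_subgroup L).nontrivial_iff_card.1 ((nontrivial_iff_ne_bot L).2 hL)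
    exact hn ▸ dvd_pow_self p hn0.ne'
  obtain ⟨w, hw, hw1⟩ := (hG.of_equiv ConjAct.toConjAct)
    |>.exists_fixed_point_of_prime_dvd_card_of_fixed_point N (hdvd hN) (a := 1) (smul_one ·)
  have hwc : (w : G) ∈ center G := mem_center_iff.2 fun g => by
    have := congrArg Subtype.val (hw (ConjAct.toConjAct g))
    rw [ConjAct.Subgroup.val_conj_smul, ConjAct.toConjAct_smul] at this
    exact mul_inv_eq_iff_eq_mul.1 this
  have hNc : N ⊓ center G ≠ ⊥ := fun h => by
    have hw' : (w : G) ∈ N ⊓ center G := ⟨w.2, hwc⟩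
    rw [h, mem_bot] at hw'
    exact hw1 (Subtype.ext hw'.symm)
  obtain ⟨z, hz⟩ := exists_prime_orderOf_dvd_card' p (hdvd hNc)
  exact ⟨z, z.2, by rwa [orderOf_coe]⟩

theorem IsPGroup.commutator_eq_bot_of_index_eq_two {G : Type*} [Group G] [Finite G]
    (hG : IsPGroup 2 G) (hrank : Group.rank (G ⧸ commutator G) ≤ 3)
    {H₁ H₂ H₃ : Subgroup G} (h12 : H₁ ≠ H₂) (h13 : H₁ ≠ H₃) (h23 : H₂ ≠ H₃)
    (hi₁ : H₁.index = 2) (hi₂ : H₂.index = 2) (hi₃ : H₃.index = 2) (hint : H₁ ⊓ H₂ ≤ H₃)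
    (hc₁ : ⁅H₁, H₁⁆ = commutator G) (hc₂ : ⁅H₂, H₂⁆ = commutator G)
    (hc₃ : ⁅H₃, H₃⁆ = commutator G) : commutator G = ⊥ := by
  induction h : Nat.card G using Nat.strong_induction_on generalizing G with
  | _ n ih =>
  by_contra hne
  -- divide out a central subgroup `M = ⟨z⟩ ≤ G'` of order 2; by induction `G' ≤ M`
  obtain ⟨z, ⟨hzG, hzZ⟩, hz⟩ := hG.exists_mem_inf_center_orderOf_eq hne
  set M := zpowers z
  have hMZ : M ≤ center G := zpowers_le.2 hzZ
  have : M.Normal := ⟨fun m hm g => by rwa [mem_center_iff.1 (hMZ hm) g, mul_inv_cancel_right]⟩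
  set f := QuotientGroup.mk' M
  have hf : Function.Surjective f := QuotientGroup.mk'_surjective M
  have hker : ∀ {H : Subgroup G}, H.index = 2 → f.ker ≤ H := fun hH => by
    rw [QuotientGroup.ker_mk']; exact (zpowers_le.2 hzG).trans (commutator_le_of_index_eq_two hH)
  have hne' : ∀ {H K : Subgroup G}, H.index = 2 → K.index = 2 → H ≠ K → H.map f ≠ K.map f :=
    fun hH hK => mt (map_injective_of_ker_le f (hker hH) (hker hK))
  have hi' : ∀ {H : Subgroup G}, H.index = 2 → (H.map f).index = 2 := fun hH =>
    (index_map_eq _ hf (hker hH)).trans hH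
  have hc' : ∀ {H : Subgroup G}, ⁅H, H⁆ = commutator G →
      ⁅H.map f, H.map f⁆ = commutator (G ⧸ M) := fun hH => by
    rw [← map_commutator, hH, map_commutator_of_surjective hf]
  have hlt : Nat.card (G ⧸ M) < n := by
    have := M.card_mul_index
    rw [Nat.card_zpowers, hz, index_eq_card, h] at this
    have := Nat.card_pos (α := G ⧸ M)
    omega
  have hquot := ih _ hlt (hG.to_quotient M)
    ((rank_quotient_commutator_quotient (zpowers_le.2 hzG)).trans_le hrank)
    (hne' hi₁ hi₂ h12) (hne' hi₁ hi₃ h13) (hne' hi₂ hi₃ h23) (hi' hi₁) (hi' hi₂) (hi' hi₃)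
    (map_inf_map_le_map (hker hi₂) hint) (hc' hc₁) (hc' hc₂) (hc' hc₃) rfl
  rw [← map_commutator_of_surjective hf, Subgroup.map_eq_bot_iff, QuotientGroup.ker_mk'] at hquot
  have hsq : z ^ 2 = 1 := hz ▸ pow_orderOf_eq_one z
  refine hne (commutator_eq_bot_of_le_center hrank (hquot.trans hMZ) (fun g hg => ?_)
    h12 h13 h23 hi₁ hi₂ hi₃ hint hc₁ hc₂ hc₃)
  rcases eq_one_or_eq_of_mem_zpowers hsq (hquot hg) with rfl | rfl
  · exact one_pow 2
  · exact hsq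

/-- **Proposition 10.** Let `G` be a finite 2-group such that `G/G'` has rank 3. Suppose
`H₁, H₂, H₃` are three pairwise distinct maximal subgroups of `G` with `H₁ ∩ H₂ ⊆ H₃` and
such that `H₁' = H₂' = H₃' = G'`. Then `G' = 1`, i.e. `G` is abelian. -/
theorem stmt_0 (G : Type*) [Group G] [Finite G] (hG : IsPGroup 2 G)
    (hrank : Group.rank (G ⧸ commutator G) = 3)
    (H₁ H₂ H₃ : Subgroup G)
    (h12 : H₁ ≠ H₂) (h13 : H₁ ≠ H₃) (h23 : H₂ ≠ H₃)
    (hm1 : IsCoatom H₁) (hm2 : IsCoatom H₂) (hm3 : IsCoatom H₃)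
    (hint : H₁ ⊓ H₂ ≤ H₃)
    (hc1 : ⁅H₁, H₁⁆ = commutator G) (hc2 : ⁅H₂, H₂⁆ = commutator G)
    (hc3 : ⁅H₃, H₃⁆ = commutator G) :
    commutator G = ⊥ :=
  hG.commutator_eq_bot_of_index_eq_two hrank.le h12 h13 h23 (hG.index_eq_of_isCoatom hm1)
    (hG.index_eq_of_isCoatom hm2) (hG.index_eq_of_isCoatom hm3) hint hc1 hc2 hc3
end

section
/- Let G be a finite 2-group generated by elements a₁, a₂, a₃ satisfying a₁² ≡ [a₁,a₂], a₂² ≡ [a₂,a₃], and a₃² ≡ [a₁,a₃] modulo G₃ (these congruences hold whenever G/G₃ is isomorphic to the group 64.150). Then the commutator subgroup satisfies G' = ⟨a₁², a₂², a₃²⟩ = ⟨[a₁,a₂], [a₂,a₃], [a₁,a₃]⟩. -/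
/-!
Mathlib's `lowerCentralSeries k` is `G_{k+1}`; below `G_k` is the paper's indexing.

Strong induction on `|G|`, carrying along the stronger claim `G_{k+1} ≤ ⟨x² | x ∈ G_k⟩` for
`k ≥ 2`. If `G` has class `c ≥ 3`, the last term `N = G_c` is central and nontrivial, and the
quotient `G/N` gives all claims modulo `N`. The heart of the step is `N ≤ ⟨x² | x ∈ G_{c-1}⟩`:
for `c ≥ 4` it follows from `[y², g] = [y, g]²` for `y ∈ G_{c-2}` (as `[G_{c-1}, G_{c-2}] = 1`);
for `c = 3` the congruences `a_i² ≡ [a_i, a_j]` force every `[a_i², a_j]` to be a product of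
squares of elements of `G'`. Finally, for central `N` in a finite 2-group, `N ≤ X ⊔ ⟨n² | n ∈ N⟩`
implies `N ≤ X` (iterate and use that the exponent is a power of 2), which turns `G' = X ⊔ N`
into `G' = X` for `X = ⟨a_i²⟩` and `X = ⟨[a_i, a_j]⟩`. In class `≤ 2` the commutator map is
bilinear and the congruences are equalities.
-/

open Subgroup
open scoped commutatorElement

section

variable {G : Type*} [Group G]

theorem commutatorElement_sq_left (x g : G) : ⁅x ^ 2, g⁆ = ⁅⁅x, g⁆, x⁆⁻¹ * ⁅x, g⁆ ^ 2 := by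
  simp only [commutatorElement_def, pow_two, mul_inv_rev, inv_inv, mul_assoc, inv_mul_cancel_left,
    mul_inv_cancel_left]

theorem commutatorElement_inv_left_of_commute {u g : G} (h : Commute u ⁅u, g⁆) :
    ⁅u⁻¹, g⁆ = ⁅u, g⁆⁻¹ := by
  have : ⁅u⁻¹, g⁆ = u⁻¹ * ⁅u, g⁆⁻¹ * u := by simp only [commutatorElement_def]; group
  rw [this, mul_assoc, ← h.inv_right.eq, inv_mul_cancel_left]

theorem commutatorElement_mul_left_of_mem_center {z : G} (hz : z ∈ center G) (c g : G) :
    ⁅z * c, g⁆ = ⁅c, g⁆ := by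
  have : ⁅z * c, g⁆ = z * (c * g * c⁻¹) * z⁻¹ * g⁻¹ := by simp only [commutatorElement_def]; group
  rw [this, ← mem_center_iff.mp hz, mul_inv_cancel_right, commutatorElement_def]

theorem closure_commutators_le_commutator (a₁ a₂ a₃ : G) :
    closure {⁅a₁, a₂⁆, ⁅a₂, a₃⁆, ⁅a₁, a₃⁆} ≤ commutator G := by
  rw [commutator_eq_closure]
  refine closure_mono ?_
  simp only [Set.insert_subset_iff, Set.singleton_subset_iff]
  exact ⟨commutator_mem_commutatorSet _ _, commutator_mem_commutatorSet _ _,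
    commutator_mem_commutatorSet _ _⟩

namespace Subgroup

theorem le_center_of_commutator_eq_bot {N : Subgroup G} (h : ⁅N, (⊤ : Subgroup G)⁆ = ⊥) :
    N ≤ center G := by
  rwa [commutator_eq_bot_iff_le_centralizer, coe_top, centralizer_univ] at h

theorem normal_of_le_center {N : Subgroup G} (h : N ≤ center G) : N.Normal :=
  ⟨fun n hn g => by rwa [mem_center_iff.mp (h hn) g, mul_inv_cancel_right]⟩

theorem commutator_le_iff_map_le_centralizer {H K M : Subgroup G} [M.Normal] :
    ⁅H, K⁆ ≤ M ↔ H.map (QuotientGroup.mk' M) ≤ centralizer (K.map (QuotientGroup.mk' M)) := by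
  rw [← commutator_eq_bot_iff_le_centralizer, ← map_commutator, map_eq_bot_iff,
    QuotientGroup.ker_mk']

theorem commutator_sup_le_of_normal {H₁ H₂ K M : Subgroup G} [M.Normal] (h₁ : ⁅H₁, K⁆ ≤ M)
    (h₂ : ⁅H₂, K⁆ ≤ M) : ⁅H₁ ⊔ H₂, K⁆ ≤ M := by
  rw [commutator_le_iff_map_le_centralizer] at *
  rw [map_sup]
  exact sup_le h₁ h₂

theorem commutator_closure_le_of_normal {S R : Set G} {M : Subgroup G} [M.Normal]
    (h : ∀ s ∈ S, ∀ r ∈ R, ⁅s, r⁆ ∈ M) : ⁅closure S, closure R⁆ ≤ M := by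
  rw [commutator_le_iff_map_le_centralizer, MonoidHom.map_closure, MonoidHom.map_closure,
    centralizer_closure, closure_le]
  rintro _ ⟨s, hs, rfl⟩ _ ⟨r, hr, rfl⟩
  have := (QuotientGroup.eq_one_iff _).mpr (h s hs r hr)
  rw [← QuotientGroup.mk'_apply, map_commutatorElement,
    commutatorElement_eq_one_iff_commute] at this
  exact this.eq.symm

theorem commutator_commutator_le_of_rotate {H₁ H₂ H₃ M : Subgroup G} [M.Normal]
    (h₁ : ⁅⁅H₂, H₃⁆, H₁⁆ ≤ M) (h₂ : ⁅⁅H₃, H₁⁆, H₂⁆ ≤ M) : ⁅⁅H₁, H₂⁆, H₃⁆ ≤ M := by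
  simp only [← QuotientGroup.ker_mk' M, ← map_eq_bot_iff, map_commutator] at *
  exact commutator_commutator_eq_bot_of_rotate h₁ h₂

theorem commutator_lowerCentralSeries_le (i j : ℕ) :
    ⁅(⊤ : Subgroup G).lowerCentralSeries i, (⊤ : Subgroup G).lowerCentralSeries j⁆ ≤
      (⊤ : Subgroup G).lowerCentralSeries (i + j + 1) := by
  induction j generalizing i with
  | zero => rfl
  | succ j ih =>
    rw [lowerCentralSeries_succ, commutator_comm]
    refine commutator_commutator_le_of_rotate ?_ ?_
    · rw [commutator_comm ⊤, ← lowerCentralSeries_succ]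
      exact (ih (i + 1)).trans_eq (by congr 1; omega)
    · exact (commutator_mono (ih i) le_rfl).trans_eq (by rw [← lowerCentralSeries_succ]; rfl)

theorem map_top_lowerCentralSeries {H : Type*} [Group H] {f : G →* H}
    (hf : Function.Surjective f) (k : ℕ) :
    ((⊤ : Subgroup G).lowerCentralSeries k).map f = (⊤ : Subgroup H).lowerCentralSeries k := by
  rw [map_lowerCentralSeries, map_top_of_surjective f hf]

theorem card_quotient_lt [Finite G] {N : Subgroup G} (hN : N ≠ ⊥) :
    Nat.card (G ⧸ N) < Nat.card G := by
  rw [card_eq_card_quotient_mul_card_subgroup N]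
  exact lt_mul_of_one_lt_right Nat.card_pos ((one_lt_card_iff_ne_bot N).mpr hN)

def squares (H : Subgroup G) : Subgroup G :=
  closure ((· ^ 2) '' (H : Set G))

theorem sq_mem_squares {H : Subgroup G} {y : G} (hy : y ∈ H) : y ^ 2 ∈ squares H :=
  subset_closure ⟨y, hy, rfl⟩

theorem squares_le (H : Subgroup G) : squares H ≤ H :=
  closure_le _ |>.mpr <| by rintro _ ⟨y, hy, rfl⟩; exact pow_mem hy 2

theorem squares_mono {H K : Subgroup G} (h : H ≤ K) : squares H ≤ squares K :=
  closure_mono (Set.image_mono h)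

theorem map_squares {G' : Type*} [Group G'] (f : G →* G') (H : Subgroup G) :
    (squares H).map f = squares (H.map f) := by
  rw [squares, squares, MonoidHom.map_closure, coe_map, Set.image_image, Set.image_image]
  simp only [map_pow]

instance squares_normal (H : Subgroup G) [hH : H.Normal] : (squares H).Normal := by
  refine ⟨fun n hn g => ?_⟩
  have := mem_map_of_mem (MulAut.conj g).toMonoidHom hn
  rw [map_squares] at this
  refine squares_mono (fun x hx => ?_) this
  obtain ⟨y, hy, rfl⟩ := hx
  exact hH.conj_mem y hy g

theorem squares_sup_le_of_le_center {H N : Subgroup G} (hN : N ≤ center G) :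
    squares (H ⊔ N) ≤ H ⊔ squares N := by
  have := normal_of_le_center hN
  refine closure_le _ |>.mpr ?_
  rintro _ ⟨y, hy, rfl⟩
  rw [SetLike.mem_coe, ← SetLike.mem_coe, mul_normal, Set.mem_mul] at hy
  obtain ⟨h, hh, n, hn, rfl⟩ := hy
  have hc : Commute h n := mem_center_iff.mp (hN hn) h
  change (h * n) ^ 2 ∈ H ⊔ squares N
  rw [hc.mul_pow]
  exact mul_mem (mem_sup_left (pow_mem hh 2)) (mem_sup_right (sq_mem_squares hn))

theorem iterate_squares_le (N : Subgroup G) (k : ℕ) : squares^[k] N ≤ N := by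
  induction k with
  | zero => exact le_rfl
  | succ k ih => exact (Function.iterate_succ_apply' squares k N).trans_le ((squares_le _).trans ih)

theorem pow_eq_one_of_mem_squares {N : Subgroup G} (hN : N ≤ center G) {n : ℕ}
    (h : ∀ y ∈ N, y ^ (2 * n) = 1) {x : G} (hx : x ∈ squares N) : x ^ n = 1 := by
  induction hx using closure_induction with
  | mem _ hy => obtain ⟨y, hy, rfl⟩ := hy; rw [← pow_mul]; exact h y hy
  | one => exact one_pow n
  | mul a b ha hb iha ihb =>
    have hc : Commute a b := mem_center_iff.mp (hN (squares_le N hb)) a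
    rw [hc.mul_pow, iha, ihb, one_mul]
  | inv a _ iha => rw [inv_pow, iha, inv_one]

theorem pow_eq_one_of_mem_iterate_squares {N : Subgroup G} (hN : N ≤ center G) {k n : ℕ}
    (h : ∀ y ∈ N, y ^ (2 ^ k * n) = 1) {x : G} (hx : x ∈ squares^[k] N) : x ^ n = 1 := by
  induction k generalizing N with
  | zero => simpa using h x hx
  | succ k ih =>
    rw [Function.iterate_succ_apply] at hx
    refine ih ((squares_le N).trans hN) (fun y hy => pow_eq_one_of_mem_squares hN ?_ hy) hx
    simpa only [← mul_assoc, ← pow_succ'] using h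

theorem le_of_le_sup_squares [Finite G] (hG : IsPGroup 2 G) {H N : Subgroup G}
    (hN : N ≤ center G) (h : N ≤ H ⊔ squares N) : N ≤ H := by
  have key : ∀ k, N ≤ H ⊔ squares^[k] N := by
    intro k
    induction k with
    | zero => exact le_sup_right
    | succ k ih =>
      rw [Function.iterate_succ_apply']
      calc N ≤ H ⊔ squares N := h
        _ ≤ H ⊔ squares (H ⊔ squares^[k] N) := sup_le_sup_left (squares_mono ih) H
        _ ≤ H ⊔ squares (squares^[k] N) :=
          sup_le le_sup_left (squares_sup_le_of_le_center ((iterate_squares_le N k).trans hN))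
  obtain ⟨e, he⟩ := hG.exists_card_eq
  have hbot : squares^[e] N = ⊥ := (eq_bot_iff_forall _).mpr fun x hx => by
    simpa using pow_eq_one_of_mem_iterate_squares (n := 1) hN
      (fun y _ => by rw [mul_one, ← he, pow_card_eq_one']) hx
  simpa [hbot] using key e

theorem commutator_squares_le {A : Subgroup G} [A.Normal]
    (h : ⁅⁅A, (⊤ : Subgroup G)⁆, A⁆ = ⊥) :
    ⁅squares A, (⊤ : Subgroup G)⁆ ≤ squares ⁅A, (⊤ : Subgroup G)⁆ := by
  conv_lhs => rw [squares, ← closure_univ]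
  refine commutator_closure_le_of_normal ?_
  rintro _ ⟨y, hy, rfl⟩ g -
  have hyg : ⁅y, g⁆ ∈ ⁅A, ⊤⁆ := commutator_mem_commutator hy (mem_top g)
  have hc : ⁅⁅y, g⁆, y⁆ = 1 := by
    simpa [h] using commutator_mem_commutator hyg hy
  change ⁅y ^ 2, g⁆ ∈ _
  rw [commutatorElement_sq_left, hc, inv_one, one_mul]
  exact sq_mem_squares hyg

theorem lowerCentralSeries_le_squares_of_le_sup {k : ℕ}
    (hbot : (⊤ : Subgroup G).lowerCentralSeries (k + 4) = ⊥)
    (h : (⊤ : Subgroup G).lowerCentralSeries (k + 2) ≤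
      squares ((⊤ : Subgroup G).lowerCentralSeries (k + 1)) ⊔
        (⊤ : Subgroup G).lowerCentralSeries (k + 3)) :
    (⊤ : Subgroup G).lowerCentralSeries (k + 3) ≤
      squares ((⊤ : Subgroup G).lowerCentralSeries (k + 2)) := by
  have hcomm : ⁅⁅(⊤ : Subgroup G).lowerCentralSeries (k + 1), (⊤ : Subgroup G)⁆,
      (⊤ : Subgroup G).lowerCentralSeries (k + 1)⁆ = ⊥ := by
    refine le_bot_iff.mp ((commutator_lowerCentralSeries_le (k + 2) (k + 1)).trans ?_)
    exact hbot ▸ lowerCentralSeries_antitone ⊤ (by omega)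
  calc (⊤ : Subgroup G).lowerCentralSeries (k + 3)
      ≤ ⁅squares ((⊤ : Subgroup G).lowerCentralSeries (k + 1)) ⊔
          (⊤ : Subgroup G).lowerCentralSeries (k + 3), (⊤ : Subgroup G)⁆ := commutator_mono h le_rfl
    _ ≤ squares ((⊤ : Subgroup G).lowerCentralSeries (k + 2)) :=
      commutator_sup_le_of_normal (commutator_squares_le hcomm) (hbot.trans_le bot_le)

end Subgroup

theorem commutatorElement_sq_mem_squares (h3 : (⊤ : Subgroup G).lowerCentralSeries 3 = ⊥)
    {x y c : G} (hc : c = ⁅x, y⁆ ∨ c = ⁅y, x⁆)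
    (hxc : x ^ 2 * c⁻¹ ∈ (⊤ : Subgroup G).lowerCentralSeries 2) :
    ⁅x ^ 2, y⁆ ∈ squares (commutator G) ∧ ⁅y ^ 2, x⁆ ∈ squares (commutator G) := by
  have hcen : (⊤ : Subgroup G).lowerCentralSeries 2 ≤ center G := le_center_of_commutator_eq_bot h3
  have hmem : ∀ u v : G, ⁅u, v⁆ ∈ commutator G := fun u v =>
    commutator_mem_commutator (mem_top u) (mem_top v)
  have hinv : ∀ u ∈ commutator G, ∀ g : G, ⁅u⁻¹, g⁆ = ⁅u, g⁆⁻¹ := fun u hu g =>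
    commutatorElement_inv_left_of_commute
      (mem_center_iff.mp (hcen (commutator_mem_commutator hu (mem_top g))) u)
  have hxsq : ∀ g : G, ⁅x ^ 2, g⁆ = ⁅c, g⁆ := fun g => by
    conv_lhs => rw [← inv_mul_cancel_right (x ^ 2) c]
    exact commutatorElement_mul_left_of_mem_center (hcen hxc) c g
  have hpm : ∀ g : G, ⁅⁅x, y⁆, g⁆ = ⁅c, g⁆ ∨ ⁅⁅x, y⁆, g⁆ = ⁅c, g⁆⁻¹ := by
    rcases hc with rfl | rfl
    · exact fun g => Or.inl rfl
    · exact fun g => Or.inr (by rw [← commutatorElement_inv y x, hinv _ (hmem y x)])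
  have hdx : ⁅⁅x, y⁆, x⁆ = 1 := by
    have : ⁅c, x⁆ = 1 := by
      rw [← hxsq, commutatorElement_eq_one_iff_commute]
      exact (Commute.refl x).pow_left 2
    rcases hpm x with h | h <;> rw [h, this]
    exact inv_one
  have hxy : ⁅x ^ 2, y⁆ = ⁅x, y⁆ ^ 2 := by
    rw [commutatorElement_sq_left, hdx, inv_one, one_mul]
  have hdy : ⁅⁅x, y⁆, y⁆ ∈ squares (commutator G) := by
    have : ⁅c, y⁆ ∈ squares (commutator G) := by
      rw [← hxsq, hxy]; exact sq_mem_squares (hmem x y)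
    rcases hpm y with h | h <;> rw [h]
    exacts [this, inv_mem this]
  refine ⟨hxy ▸ sq_mem_squares (hmem x y), ?_⟩
  rw [commutatorElement_sq_left, ← commutatorElement_inv x y, hinv _ (hmem x y), inv_inv]
  exact mul_mem hdy (sq_mem_squares (inv_mem (hmem x y)))

theorem commutator_eq_closure_of_lowerCentralSeries_two_eq_bot {a₁ a₂ a₃ : G}
    (hgen : closure {a₁, a₂, a₃} = ⊤) (h2 : (⊤ : Subgroup G).lowerCentralSeries 2 = ⊥) :
    commutator G = closure {⁅a₁, a₂⁆, ⁅a₂, a₃⁆, ⁅a₁, a₃⁆} := by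
  have hK := closure_commutators_le_commutator a₁ a₂ a₃
  have := normal_of_le_center (hK.trans (le_center_of_commutator_eq_bot h2))
  refine le_antisymm ?_ hK
  rw [commutator_def, ← hgen]
  refine commutator_closure_le_of_normal ?_
  simp only [Set.mem_insert_iff, Set.mem_singleton_iff]
  rintro x (rfl | rfl | rfl) y (rfl | rfl | rfl)
  all_goals first
    | rw [commutatorElement_self]; exact one_mem _
    | apply Subgroup.subset_closure; simp; done
    | rw [← inv_mem_iff, commutatorElement_inv]; apply Subgroup.subset_closure; simp

structure IsSquareCommutatorTriple (a₁ a₂ a₃ : G) : Prop where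
  closure_eq_top : closure {a₁, a₂, a₃} = ⊤
  sq_one : a₁ ^ 2 * ⁅a₁, a₂⁆⁻¹ ∈ (⊤ : Subgroup G).lowerCentralSeries 2
  sq_two : a₂ ^ 2 * ⁅a₂, a₃⁆⁻¹ ∈ (⊤ : Subgroup G).lowerCentralSeries 2
  sq_three : a₃ ^ 2 * ⁅a₁, a₃⁆⁻¹ ∈ (⊤ : Subgroup G).lowerCentralSeries 2

namespace IsSquareCommutatorTriple

variable {a₁ a₂ a₃ : G}

theorem map {H : Type*} [Group H] (ha : IsSquareCommutatorTriple a₁ a₂ a₃) {f : G →* H}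
    (hf : Function.Surjective f) : IsSquareCommutatorTriple (f a₁) (f a₂) (f a₃) := by
  have hrel : ∀ {x y z : G}, x ^ 2 * ⁅y, z⁆⁻¹ ∈ (⊤ : Subgroup G).lowerCentralSeries 2 →
      f x ^ 2 * ⁅f y, f z⁆⁻¹ ∈ (⊤ : Subgroup H).lowerCentralSeries 2 := fun h => by
    have := mem_map_of_mem f h
    rwa [map_top_lowerCentralSeries hf, map_mul, map_pow, map_inv, map_commutatorElement] at this
  refine ⟨?_, hrel ha.sq_one, hrel ha.sq_two, hrel ha.sq_three⟩
  rw [← map_top_of_surjective f hf, ← ha.closure_eq_top, MonoidHom.map_closure]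
  simp only [Set.image_insert_eq, Set.image_singleton]

theorem closure_sq_le_commutator (ha : IsSquareCommutatorTriple a₁ a₂ a₃) :
    closure {a₁ ^ 2, a₂ ^ 2, a₃ ^ 2} ≤ commutator G := by
  have hrel : ∀ {x y z : G}, x ^ 2 * ⁅y, z⁆⁻¹ ∈ (⊤ : Subgroup G).lowerCentralSeries 2 →
      x ^ 2 ∈ commutator G := fun {x y z} h => by
    rw [← inv_mul_cancel_right (x ^ 2) ⁅y, z⁆]
    exact mul_mem (Subgroup.lowerCentralSeries_antitone ⊤ one_le_two h)
      (commutator_mem_commutator (mem_top _) (mem_top _))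
  simp only [closure_le, Set.insert_subset_iff, Set.singleton_subset_iff, SetLike.mem_coe]
  exact ⟨hrel ha.sq_one, hrel ha.sq_two, hrel ha.sq_three⟩

theorem lowerCentralSeries_two_le_squares (ha : IsSquareCommutatorTriple a₁ a₂ a₃)
    (h3 : (⊤ : Subgroup G).lowerCentralSeries 3 = ⊥)
    (hT : commutator G ≤ closure {a₁ ^ 2, a₂ ^ 2, a₃ ^ 2} ⊔ (⊤ : Subgroup G).lowerCentralSeries 2) :
    (⊤ : Subgroup G).lowerCentralSeries 2 ≤ squares (commutator G) := by
  obtain ⟨p₁, q₁⟩ := commutatorElement_sq_mem_squares h3 (Or.inl rfl) ha.sq_one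
  obtain ⟨p₂, q₂⟩ := commutatorElement_sq_mem_squares h3 (Or.inl rfl) ha.sq_two
  obtain ⟨p₃, q₃⟩ := commutatorElement_sq_mem_squares h3 (Or.inr rfl) ha.sq_three
  have gens : ∀ s ∈ ({a₁ ^ 2, a₂ ^ 2, a₃ ^ 2} : Set G), ∀ r ∈ ({a₁, a₂, a₃} : Set G),
      ⁅s, r⁆ ∈ squares (commutator G) := by
    simp only [Set.mem_insert_iff, Set.mem_singleton_iff]
    rintro s (rfl | rfl | rfl) r (rfl | rfl | rfl)
    all_goals first
      | assumption
      | rw [commutatorElement_eq_one_iff_commute.mpr ((Commute.refl _).pow_left 2)]; exact one_mem _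
  calc (⊤ : Subgroup G).lowerCentralSeries 2
      = ⁅commutator G, closure {a₁, a₂, a₃}⁆ := by rw [ha.closure_eq_top]; rfl
    _ ≤ ⁅closure {a₁ ^ 2, a₂ ^ 2, a₃ ^ 2} ⊔ (⊤ : Subgroup G).lowerCentralSeries 2,
          closure {a₁, a₂, a₃}⁆ := commutator_mono hT le_rfl
    _ ≤ squares (commutator G) := by
      refine commutator_sup_le_of_normal (commutator_closure_le_of_normal gens) ?_
      rw [ha.closure_eq_top]
      exact h3.trans_le bot_le

theorem commutator_eq_closures_of_le_sup [Finite G] (hG : IsPGroup 2 G)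
    (ha : IsSquareCommutatorTriple a₁ a₂ a₃) {q : ℕ}
    (hq : (⊤ : Subgroup G).lowerCentralSeries (q + 3) = ⊥)
    (hT : commutator G ≤ closure {a₁ ^ 2, a₂ ^ 2, a₃ ^ 2} ⊔
      (⊤ : Subgroup G).lowerCentralSeries (q + 2))
    (hK : commutator G ≤ closure {⁅a₁, a₂⁆, ⁅a₂, a₃⁆, ⁅a₁, a₃⁆} ⊔
      (⊤ : Subgroup G).lowerCentralSeries (q + 2))
    (hD : ∀ k, (⊤ : Subgroup G).lowerCentralSeries (k + 2) ≤
      squares ((⊤ : Subgroup G).lowerCentralSeries (k + 1)) ⊔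
        (⊤ : Subgroup G).lowerCentralSeries (q + 2)) :
    commutator G = closure {a₁ ^ 2, a₂ ^ 2, a₃ ^ 2} ∧
      commutator G = closure {⁅a₁, a₂⁆, ⁅a₂, a₃⁆, ⁅a₁, a₃⁆} ∧
      ∀ k, (⊤ : Subgroup G).lowerCentralSeries (k + 2) ≤
        squares ((⊤ : Subgroup G).lowerCentralSeries (k + 1)) := by
  set N := (⊤ : Subgroup G).lowerCentralSeries (q + 2)
  have hNc : N ≤ center G := le_center_of_commutator_eq_bot hq
  have hN : N ≤ squares ((⊤ : Subgroup G).lowerCentralSeries (q + 1)) := by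
    rcases q with _ | r
    · exact ha.lowerCentralSeries_two_le_squares hq hT
    · exact lowerCentralSeries_le_squares_of_le_sup hq (hD r)
  have hsq : ∀ k ≤ q, N ≤ squares ((⊤ : Subgroup G).lowerCentralSeries (k + 1)) := fun k hk =>
    hN.trans (squares_mono (Subgroup.lowerCentralSeries_antitone ⊤ (by omega)))
  have eq_of_le_sup : ∀ X, commutator G ≤ X ⊔ N → X ≤ commutator G → commutator G = X := by
    refine fun X hX hXG => le_antisymm (hX.trans (sup_le le_rfl ?_)) hXG
    refine le_of_le_sup_squares hG hNc ((hsq 0 (Nat.zero_le q)).trans ?_)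
    exact (squares_mono hX).trans (squares_sup_le_of_le_center hNc)
  refine ⟨eq_of_le_sup _ hT ha.closure_sq_le_commutator,
    eq_of_le_sup _ hK (closure_commutators_le_commutator a₁ a₂ a₃), fun k => ?_⟩
  by_cases hk : k ≤ q
  · exact (hD k).trans (sup_le le_rfl (hsq k hk))
  · exact (Subgroup.lowerCentralSeries_antitone ⊤ (by omega : q + 3 ≤ k + 2)).trans
      (hq.trans_le bot_le)

theorem commutator_eq_closures [Finite G] (hG : IsPGroup 2 G)
    (ha : IsSquareCommutatorTriple a₁ a₂ a₃) :
    commutator G = closure {a₁ ^ 2, a₂ ^ 2, a₃ ^ 2} ∧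
      commutator G = closure {⁅a₁, a₂⁆, ⁅a₂, a₃⁆, ⁅a₁, a₃⁆} ∧
      ∀ k, (⊤ : Subgroup G).lowerCentralSeries (k + 2) ≤
        squares ((⊤ : Subgroup G).lowerCentralSeries (k + 1)) := by
  induction h : Nat.card G using Nat.strong_induction_on generalizing G with
  | _ n ih =>
  by_cases h2 : (⊤ : Subgroup G).lowerCentralSeries 2 = ⊥
  · have hK := commutator_eq_closure_of_lowerCentralSeries_two_eq_bot ha.closure_eq_top h2
    have hrel : ∀ {x y z : G}, x ^ 2 * ⁅y, z⁆⁻¹ ∈ (⊤ : Subgroup G).lowerCentralSeries 2 →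
        x ^ 2 = ⁅y, z⁆ := fun hx => mul_inv_eq_one.mp (by rwa [h2, mem_bot] at hx)
    refine ⟨by rw [hK, hrel ha.sq_one, hrel ha.sq_two, hrel ha.sq_three], hK, fun k => ?_⟩
    exact (Subgroup.lowerCentralSeries_antitone ⊤ (by omega : 2 ≤ k + 2)).trans (h2.trans_le bot_le)
  have : Fact (Nat.Prime 2) := ⟨Nat.prime_two⟩
  have := hG.isNilpotent
  have hclass : 2 < Group.nilpotencyClass G := by
    rwa [← not_le, ← Subgroup.lowerCentralSeries_eq_bot_iff_nilpotencyClass_le]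
  obtain ⟨q, hq⟩ : ∃ q, Group.nilpotencyClass G = q + 3 := ⟨_, (Nat.sub_add_cancel hclass).symm⟩
  set N := (⊤ : Subgroup G).lowerCentralSeries (q + 2)
  have hN : N ≠ ⊥ := by rw [Ne, Subgroup.lowerCentralSeries_eq_bot_iff_nilpotencyClass_le]; omega
  have hπ := QuotientGroup.mk'_surjective N
  obtain ⟨hT, hK, hD⟩ := ih _ (h ▸ card_quotient_lt hN) (hG.to_quotient N) (ha.map hπ) rfl
  have pull : ∀ {H K : Subgroup G}, H.map (QuotientGroup.mk' N) ≤ K.map (QuotientGroup.mk' N) →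
      H ≤ K ⊔ N := fun h => by rwa [Subgroup.map_le_map_iff, QuotientGroup.ker_mk'] at h
  refine ha.commutator_eq_closures_of_le_sup hG
    (Subgroup.lowerCentralSeries_eq_bot_iff_nilpotencyClass_le.mpr hq.le)
    (pull ?_) (pull ?_) (fun k => pull ?_)
  · rw [← top_lowerCentralSeries_one, map_top_lowerCentralSeries hπ, top_lowerCentralSeries_one, hT,
      MonoidHom.map_closure]
    simp only [Set.image_insert_eq, Set.image_singleton, map_pow, le_rfl]
  · rw [← top_lowerCentralSeries_one, map_top_lowerCentralSeries hπ, top_lowerCentralSeries_one, hK,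
      MonoidHom.map_closure]
    simp only [Set.image_insert_eq, Set.image_singleton, map_commutatorElement, le_rfl]
  · rw [map_squares, map_top_lowerCentralSeries hπ, map_top_lowerCentralSeries hπ]
    exact hD k

end IsSquareCommutatorTriple

end

/-- **Proposition 11 (first part).** Let `G` be a finite 2-group generated by `a₁, a₂, a₃`
with `a₁² ≡ ⁅a₁,a₂⁆`, `a₂² ≡ ⁅a₂,a₃⁆`, `a₃² ≡ ⁅a₁,a₃⁆` modulo `G₃` (as when
`G/G₃ ≃ 64.150`). Then `G' = ⟨a₁², a₂², a₃²⟩ = ⟨⁅a₁,a₂⁆, ⁅a₂,a₃⁆, ⁅a₁,a₃⁆⟩`. -/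
theorem stmt_2 (G : Type*) [Group G] [Finite G] (hG : IsPGroup 2 G)
    (a₁ a₂ a₃ : G) (hgen : Subgroup.closure {a₁, a₂, a₃} = ⊤)
    (h1 : a₁ ^ 2 * ⁅a₁, a₂⁆⁻¹ ∈ (⊤ : Subgroup G).lowerCentralSeries 2)
    (h2 : a₂ ^ 2 * ⁅a₂, a₃⁆⁻¹ ∈ (⊤ : Subgroup G).lowerCentralSeries 2)
    (h3 : a₃ ^ 2 * ⁅a₁, a₃⁆⁻¹ ∈ (⊤ : Subgroup G).lowerCentralSeries 2) :
    commutator G = Subgroup.closure {a₁ ^ 2, a₂ ^ 2, a₃ ^ 2} ∧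
      commutator G = Subgroup.closure {⁅a₁, a₂⁆, ⁅a₂, a₃⁆, ⁅a₁, a₃⁆} :=
  (IsSquareCommutatorTriple.commutator_eq_closures hG ⟨hgen, h1, h2, h3⟩).imp_right And.left
end

section
/- Let G be a finite 2-group generated by elements a₁, a₂, a₃ satisfying a₁² ≡ [a₁,a₂], a₂² ≡ [a₂,a₃], and a₃² ≡ [a₁,a₃] modulo G₃. Then for every j ≥ 2, the j-th term of the lower central series satisfies G_j = ⟨a₁^{2^{j-1}}, a₂^{2^{j-1}}, a₃^{2^{j-1}}⟩ = (G₂)^{2^{j-2}}, where (G₂)^{2^{j-2}} denotes the subgroup generated by the 2^{j-2}-th powers of elements of G' = G₂. -/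
/-!
Write `γ n` for the lower central series with Mathlib's indexing (`γ 0 = G`, `γ 1 = G'`) and
`P m` for the subgroup generated by the `2^m`-th powers of the generators. The relations give
`aᵢ² ∈ G'`, so `G/G'` has exponent 2; then squaring maps `γ n` into `γ (n+1)`, whence `P m ≤ γ m`,
and since `G` is nilpotent it suffices to show `γ m ≤ P m ⊔ γ (m+1)` for every `m ≥ 1`.

Modulo `γ (m+2)` the commutator is bilinear on `γ m × G`, so `γ (m+1)` is generated modulo
`γ (m+2)` by the commutators `⁅aᵢ^(2^m), aⱼ⁆`. Writing `aᵢ^(2^m) = u²`, the identity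
`⁅u², b⁆ = ⁅u, ⁅u, b⁆⁆ * ⁅u, b⁆²` puts them in `P (m+1) ⊔ γ (m+2)` as soon as `u` is itself a
square, i.e. for `m ≥ 2`. The cases `m = 0, 1` are where the relations enter. For `m = 0` they
say directly that `⁅aᵢ, aⱼ⁆ ∈ P 1 ⊔ γ 2`. For `m = 1`, modulo `P 2 ⊔ γ 3` a relation
`x² ≡ ⁅x, y⁆` (or `x² ≡ ⁅y, x⁆`) forces `x²` to commute with `y` and `y²` with `x`, and the
three relations cover all pairs of generators.

The description by powers of `G'` follows from `aᵢ^(2^(m+1)) = (aᵢ²)^(2^m)` with `aᵢ² ∈ G'`.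
-/

open Subgroup
open scoped commutatorElement

local notation "γ" => Subgroup.lowerCentralSeries (⊤ : Subgroup _)

namespace LowerCentralPowers

theorem le_of_le_sup_succ {α : Type*} [SemilatticeSup α] [OrderBot α] {L H : ℕ → α}
    (hL : Antitone L) (hH : Antitone H) (hstep : ∀ m, L m ≤ H m ⊔ L (m + 1))
    {N : ℕ} (hN : L N = ⊥) (m : ℕ) : L m ≤ H m := by
  have key : ∀ n, L m ≤ H m ⊔ L (m + n) := by
    intro n
    induction n with
    | zero => exact le_sup_right
    | succ n ih =>
      calc L m ≤ H m ⊔ (H (m + n) ⊔ L (m + n + 1)) := ih.trans (sup_le_sup_left (hstep _) _)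
        _ = H m ⊔ L (m + (n + 1)) := by
          rw [← sup_assoc, sup_eq_left.mpr (hH (Nat.le_add_right m n)), add_assoc]
  have hbot : L (m + N) = ⊥ := le_bot_iff.mp (hN ▸ hL (Nat.le_add_left N m))
  simpa [hbot] using key N

variable {G : Type*} [Group G]

theorem pow_two_pow_succ (x : G) (k : ℕ) : x ^ 2 ^ (k + 1) = (x ^ 2 ^ k) ^ 2 := by
  rw [pow_succ, pow_mul]

theorem commutator_sq_left (x y : G) : ⁅x ^ 2, y⁆ = ⁅x, ⁅x, y⁆⁆ * ⁅x, y⁆ ^ 2 := by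
  simp only [pow_two]; group

theorem commutator_sq_right (x y : G) :
    ⁅x, y ^ 2⁆ = (⁅x, y⁆ * ⁅y, ⁅x, y⁆⁆ * ⁅x, y⁆⁻¹) * ⁅x, y⁆ ^ 2 := by
  simp only [pow_two]; group

theorem mk_commutatorElement {K : Subgroup G} [K.Normal] (x y : G) :
    ((⁅x, y⁆ : G) : G ⧸ K) = ⁅(x : G ⧸ K), (y : G ⧸ K)⁆ :=
  map_commutatorElement (QuotientGroup.mk' K) x y

theorem commutator_mem_iff_commute {K : Subgroup G} [K.Normal] {x y : G} :
    ⁅x, y⁆ ∈ K ↔ Commute (x : G ⧸ K) y := by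
  rw [← QuotientGroup.eq_one_iff, mk_commutatorElement, commutatorElement_eq_one_iff_commute]

theorem commutator_closure_le {K : Subgroup G} [K.Normal] {s t : Set G}
    (h : ∀ x ∈ s, ∀ y ∈ t, ⁅x, y⁆ ∈ K) : ⁅Subgroup.closure s, Subgroup.closure t⁆ ≤ K := by
  rw [← QuotientGroup.ker_mk' K, ← Subgroup.map_eq_bot_iff, map_commutator,
    MonoidHom.map_closure, MonoidHom.map_closure, commutator_eq_bot_iff_le_centralizer,
    centralizer_closure, closure_le]
  rintro _ ⟨x, hx, rfl⟩ _ ⟨y, hy, rfl⟩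
  exact (commutator_mem_iff_commute.mp (h x hx y hy)).symm.eq

theorem sq_mem_of_mem_closure {K : Subgroup G} {s : Set G}
    (hK : ⁅Subgroup.closure s, Subgroup.closure s⁆ ≤ K) (hs : ∀ x ∈ s, x ^ 2 ∈ K) {x : G}
    (hx : x ∈ Subgroup.closure s) : x ^ 2 ∈ K := by
  induction hx using closure_induction with
  | mem x hx => exact hs x hx
  | one => simp
  | mul x y hx hy ihx ihy =>
    rw [show (x * y) ^ 2 = x ^ 2 * ⁅x⁻¹, y⁆ * y ^ 2 by simp only [pow_two]; group]
    exact mul_mem (mul_mem ihx (hK (commutator_mem_commutator (inv_mem hx) hy))) ihy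
  | inv x _ ihx => rw [inv_pow]; exact inv_mem ihx

section LowerCentralSeries

theorem commutator_mem_lcs_succ {n : ℕ} {x : G} (hx : x ∈ γ n) (y : G) :
    ⁅x, y⁆ ∈ γ (n + 1) :=
  commutator_mem_commutator hx (mem_top y)

theorem commutator_mem_lcs_succ' {n : ℕ} {x : G} (hx : x ∈ γ n) (y : G) :
    ⁅y, x⁆ ∈ γ (n + 1) := by
  rw [← commutatorElement_inv]
  exact inv_mem (commutator_mem_lcs_succ hx y)

theorem normal_of_lcs_succ_le {n : ℕ} {K : Subgroup G} (h₁ : γ (n + 1) ≤ K) (h₂ : K ≤ γ n) :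
    K.Normal :=
  commutator_top_right_le_iff.mp ((commutator_mono h₂ le_rfl).trans h₁)

theorem sq_mem_lcs_one_of_closure {s : Set G} (hs : Subgroup.closure s = ⊤)
    (h : ∀ a ∈ s, a ^ 2 ∈ γ 1) (g : G) : g ^ 2 ∈ γ 1 :=
  sq_mem_of_mem_closure (by rw [hs]; rfl) h (hs ▸ mem_top g)

theorem sq_mem_lcs_succ (hG2 : ∀ g : G, g ^ 2 ∈ γ 1) {n : ℕ} {x : G} (hx : x ∈ γ n) :
    x ^ 2 ∈ γ (n + 1) := by
  induction n generalizing x with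
  | zero => exact hG2 x
  | succ n ih =>
    refine sq_mem_of_mem_closure (commutator_mono le_rfl le_top) ?_ hx
    rintro _ ⟨p, hp, q, -, rfl⟩
    rw [show ⁅p, q⁆ ^ 2 = ⁅p, ⁅p, q⁆⁆⁻¹ * ⁅p ^ 2, q⁆ by rw [commutator_sq_left]; group]
    exact mul_mem (inv_mem (commutator_mem_lcs_succ' (commutator_mem_lcs_succ hp q) p))
      (commutator_mem_lcs_succ (ih hp) q)

theorem pow_two_pow_mem_lcs (hG2 : ∀ g : G, g ^ 2 ∈ γ 1) {n : ℕ} {x : G} (hx : x ∈ γ n)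
    (k : ℕ) : x ^ 2 ^ k ∈ γ (n + k) := by
  induction k with
  | zero => simpa using hx
  | succ k ih => rw [pow_two_pow_succ]; exact sq_mem_lcs_succ hG2 ih

theorem pow_two_pow_mem_lcs_self (hG2 : ∀ g : G, g ^ 2 ∈ γ 1) (g : G) (m : ℕ) :
    g ^ 2 ^ m ∈ γ m := by
  simpa using pow_two_pow_mem_lcs hG2 (n := 0) (mem_top g) m

theorem commutator_sq_mem_lcs (hG2 : ∀ g : G, g ^ 2 ∈ γ 1) {n : ℕ} {x : G} (hx : x ∈ γ n)
    (y : G) : ⁅x, y ^ 2⁆ ∈ γ (n + 2) := by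
  have hxy := commutator_mem_lcs_succ hx y
  rw [commutator_sq_right]
  exact mul_mem ((lowerCentralSeries_normal _ (n + 2)).conj_mem _
    (commutator_mem_lcs_succ' hxy y) _) (sq_mem_lcs_succ hG2 hxy)

end LowerCentralSeries

section PowerSubgroups

def closurePowTwoPow (s : Set G) (m : ℕ) : Subgroup G :=
  Subgroup.closure ((· ^ 2 ^ m) '' s)

theorem pow_two_pow_mem_closurePowTwoPow {s : Set G} {a : G} (ha : a ∈ s) (m : ℕ) :
    a ^ 2 ^ m ∈ closurePowTwoPow s m :=
  subset_closure ⟨a, ha, rfl⟩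

theorem closurePowTwoPow_antitone (s : Set G) : Antitone (closurePowTwoPow s) := by
  refine antitone_nat_of_succ_le fun m => (closure_le _).mpr ?_
  rintro _ ⟨a, ha, rfl⟩
  dsimp only
  rw [pow_two_pow_succ]
  exact pow_mem (pow_two_pow_mem_closurePowTwoPow ha m) 2

theorem closurePowTwoPow_le_lcs (hG2 : ∀ g : G, g ^ 2 ∈ γ 1) (s : Set G) (m : ℕ) :
    closurePowTwoPow s m ≤ γ m := by
  refine (closure_le _).mpr ?_
  rintro _ ⟨a, -, rfl⟩
  exact pow_two_pow_mem_lcs_self hG2 a m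

theorem closurePowTwoPow_sup_normal (hG2 : ∀ g : G, g ^ 2 ∈ γ 1) (s : Set G) (m : ℕ) :
    (closurePowTwoPow s m ⊔ γ (m + 1)).Normal :=
  normal_of_lcs_succ_le le_sup_right
    (sup_le (closurePowTwoPow_le_lcs hG2 s m) (Subgroup.lowerCentralSeries_antitone _ m.le_succ))

theorem closurePowTwoPow_sup_eq_closure (s : Set G) (m : ℕ) :
    closurePowTwoPow s m ⊔ γ (m + 1) =
      Subgroup.closure ((· ^ 2 ^ m) '' s ∪ ((γ (m + 1) : Subgroup G) : Set G)) := by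
  rw [Subgroup.closure_union, closure_eq, closurePowTwoPow]

theorem lcs_succ_le_of_commutator_mem (hG2 : ∀ g : G, g ^ 2 ∈ γ 1) {s : Set G}
    (hs : Subgroup.closure s = ⊤) {m : ℕ} (hm : γ m ≤ closurePowTwoPow s m ⊔ γ (m + 1))
    (h : ∀ a ∈ s, ∀ b ∈ s, ⁅a ^ 2 ^ m, b⁆ ∈ closurePowTwoPow s (m + 1) ⊔ γ (m + 2)) :
    γ (m + 1) ≤ closurePowTwoPow s (m + 1) ⊔ γ (m + 2) := by
  have := closurePowTwoPow_sup_normal hG2 s (m + 1)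
  rw [closurePowTwoPow_sup_eq_closure] at hm
  calc γ (m + 1)
      ≤ ⁅Subgroup.closure ((· ^ 2 ^ m) '' s ∪ ((γ (m + 1) : Subgroup G) : Set G)),
          Subgroup.closure s⁆ :=
        commutator_mono hm hs.ge
    _ ≤ _ := commutator_closure_le ?_
  rintro _ (⟨a, ha, rfl⟩ | hx) b hb
  · exact h a ha b hb
  · exact mem_sup_right (commutator_mem_lcs_succ hx b)

theorem sq_mem_of_lcs_le (hG2 : ∀ g : G, g ^ 2 ∈ γ 1) {s : Set G} {k : ℕ}
    (hk : γ (k + 1) ≤ closurePowTwoPow s (k + 1) ⊔ γ (k + 2)) {x : G} (hx : x ∈ γ (k + 1)) :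
    x ^ 2 ∈ closurePowTwoPow s (k + 2) ⊔ γ (k + 3) := by
  rw [closurePowTwoPow_sup_eq_closure] at hk
  refine sq_mem_of_mem_closure ((commutator_closure_le ?_).trans le_sup_right) ?_ (hk hx)
  · rintro _ (⟨a, -, rfl⟩ | hx) _ (⟨b, -, rfl⟩ | hy)
    · dsimp only
      rw [pow_two_pow_succ b]
      exact commutator_sq_mem_lcs hG2 (pow_two_pow_mem_lcs_self hG2 a (k + 1)) _
    · exact commutator_mem_lcs_succ' hy _
    · exact commutator_mem_lcs_succ hx _
    · exact commutator_mem_lcs_succ hx _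
  · rintro _ (⟨a, ha, rfl⟩ | hx)
    · dsimp only
      rw [← pow_two_pow_succ]
      exact mem_sup_left (pow_two_pow_mem_closurePowTwoPow ha _)
    · exact mem_sup_right (sq_mem_lcs_succ hG2 hx)

theorem lcs_le_closurePowTwoPow_sup_succ (hG2 : ∀ g : G, g ^ 2 ∈ γ 1) {s : Set G}
    (hs : Subgroup.closure s = ⊤) {k : ℕ}
    (hk : γ (k + 2) ≤ closurePowTwoPow s (k + 2) ⊔ γ (k + 3)) :
    γ (k + 3) ≤ closurePowTwoPow s (k + 3) ⊔ γ (k + 4) := by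
  refine lcs_succ_le_of_commutator_mem hG2 hs hk fun a _ b _ => ?_
  have hub := commutator_mem_lcs_succ (pow_two_pow_mem_lcs_self hG2 a (k + 1)) b
  have hcomm : ⁅⁅a ^ 2 ^ (k + 1), b⁆, a ^ 2 ^ (k + 1)⁆ ∈ γ (k + 4) := by
    have h := commutator_sq_mem_lcs hG2 hub (a ^ 2 ^ k)
    rwa [← pow_two_pow_succ] at h
  rw [pow_two_pow_succ a (k + 1), commutator_sq_left, ← commutatorElement_inv _ (a ^ 2 ^ (k + 1))]
  exact mul_mem (mem_sup_right (inv_mem hcomm)) (sq_mem_of_lcs_le hG2 hk hub)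

theorem lcs_succ_eq_closurePowTwoPow (hG2 : ∀ g : G, g ^ 2 ∈ γ 1) {s : Set G}
    (hs : Subgroup.closure s = ⊤) [hnil : Group.IsNilpotent G]
    (h₁ : γ 1 ≤ closurePowTwoPow s 1 ⊔ γ 2) (h₂ : γ 2 ≤ closurePowTwoPow s 2 ⊔ γ 3) (k : ℕ) :
    γ (k + 1) = closurePowTwoPow s (k + 1) := by
  have hstep : ∀ m, γ (m + 1) ≤ closurePowTwoPow s (m + 1) ⊔ γ (m + 2) := by
    have : ∀ m, γ (m + 2) ≤ closurePowTwoPow s (m + 2) ⊔ γ (m + 3) := fun m => by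
      induction m with
      | zero => exact h₂
      | succ m ih => exact lcs_le_closurePowTwoPow_sup_succ hG2 hs ih
    rintro (_ | m)
    exacts [h₁, this m]
  obtain ⟨N, hN⟩ := Subgroup.nilpotent_iff_lowerCentralSeries.mp hnil
  refine le_antisymm ?_ (closurePowTwoPow_le_lcs hG2 s _)
  refine le_of_le_sup_succ (L := fun m => γ (m + 1)) (H := fun m => closurePowTwoPow s (m + 1))
    (fun _ _ h => Subgroup.lowerCentralSeries_antitone _ (Nat.succ_le_succ h))
    (fun _ _ h => closurePowTwoPow_antitone s (Nat.succ_le_succ h)) hstep (N := N) ?_ k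
  exact le_bot_iff.mp (hN ▸ Subgroup.lowerCentralSeries_antitone _ N.le_succ)

theorem closurePowTwoPow_succ_le_closure_pow (hG2 : ∀ g : G, g ^ 2 ∈ γ 1) (s : Set G)
    (k : ℕ) :
    closurePowTwoPow s (k + 1) ≤
      Subgroup.closure ((· ^ 2 ^ k) '' ((γ 1 : Subgroup G) : Set G)) := by
  refine (closure_le _).mpr ?_
  rintro _ ⟨a, -, rfl⟩
  dsimp only
  rw [pow_succ', pow_mul]
  exact subset_closure ⟨a ^ 2, hG2 a, rfl⟩

theorem closure_pow_le_lcs (hG2 : ∀ g : G, g ^ 2 ∈ γ 1) (k : ℕ) :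
    Subgroup.closure ((· ^ 2 ^ k) '' ((γ 1 : Subgroup G) : Set G)) ≤ γ (k + 1) := by
  refine (closure_le _).mpr ?_
  rintro _ ⟨x, hx, rfl⟩
  simpa [add_comm] using pow_two_pow_mem_lcs hG2 hx k

end PowerSubgroups

section Relations

theorem central_mul_sq_commute_and_sq_eq_one {Q : Type*} [Group Q] {W X : Q}
    (hW : ∀ g, Commute W g) (hW2 : W ^ 2 = 1) (hX4 : X ^ 4 = 1) :
    Commute (W * X ^ 2) X ∧ (W * X ^ 2) ^ 2 = 1 := by
  refine ⟨(hW X).mul_left (Commute.pow_self X 2), ?_⟩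
  rw [(hW (X ^ 2)).mul_pow, hW2, ← pow_mul, hX4, one_mul]

theorem commute_sq_of_commutator_eq {Q : Type*} [Group Q] {W X Y : Q}
    (hW : ∀ g, Commute W g) (hW2 : W ^ 2 = 1) (hX4 : X ^ 4 = 1) (h : ⁅X, Y⁆ = W * X ^ 2) :
    Commute (X ^ 2) Y ∧ Commute (Y ^ 2) X := by
  obtain ⟨hcX, hc2⟩ := central_mul_sq_commute_and_sq_eq_one hW hW2 hX4
  have hX2Y : Commute (X ^ 2) Y := by
    rw [← commutatorElement_eq_one_iff_commute, commutator_sq_left, h,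
      commutatorElement_eq_one_iff_commute.mpr hcX.symm, hc2, one_mul]
  have hcY : Commute (W * X ^ 2) Y := (hW Y).mul_left hX2Y
  refine ⟨hX2Y, ?_⟩
  rw [← commutatorElement_eq_one_iff_commute, ← commutatorElement_inv, inv_eq_one,
    commutator_sq_right, h, commutatorElement_eq_one_iff_commute.mpr hcY.symm, hc2]
  group

theorem commute_sq_of_commutator_eq' {Q : Type*} [Group Q] {W X Y : Q}
    (hW : ∀ g, Commute W g) (hW2 : W ^ 2 = 1) (hX4 : X ^ 4 = 1) (h : ⁅Y, X⁆ = W * X ^ 2) :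
    Commute (X ^ 2) Y ∧ Commute (Y ^ 2) X := by
  obtain ⟨hcX, hc2⟩ := central_mul_sq_commute_and_sq_eq_one hW hW2 hX4
  have hX2Y : Commute (X ^ 2) Y := by
    rw [Commute.symm_iff, ← commutatorElement_eq_one_iff_commute, commutator_sq_right, h,
      commutatorElement_eq_one_iff_commute.mpr hcX.symm, hc2]
    group
  have hcY : Commute (W * X ^ 2) Y := (hW Y).mul_left hX2Y
  refine ⟨hX2Y, ?_⟩
  rw [← commutatorElement_eq_one_iff_commute, commutator_sq_left, h,
    commutatorElement_eq_one_iff_commute.mpr hcY.symm, hc2, one_mul]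

theorem exists_central_of_sq_mul_inv_mem (hG2 : ∀ g : G, g ^ 2 ∈ γ 1) {K : Subgroup G}
    [K.Normal] (hK : γ 3 ≤ K) {x z : G} (h : x ^ 2 * z⁻¹ ∈ γ 2) :
    ∃ W : G ⧸ K, (∀ g, Commute W g) ∧ W ^ 2 = 1 ∧ (z : G ⧸ K) = W * (x : G ⧸ K) ^ 2 := by
  have hw : z * (x ^ 2)⁻¹ ∈ γ 2 := by simpa using inv_mem h
  refine ⟨(z * (x ^ 2)⁻¹ : G), fun g => ?_, ?_, by simp⟩
  · induction g using QuotientGroup.induction_on with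
    | H g => exact commutator_mem_iff_commute.mp (hK (commutator_mem_lcs_succ hw g))
  · rw [← QuotientGroup.mk_pow, QuotientGroup.eq_one_iff]
    exact hK (sq_mem_lcs_succ hG2 hw)

variable {a₁ a₂ a₃ : G}

theorem sq_mem_lcs_one_of_relations (hs : Subgroup.closure {a₁, a₂, a₃} = ⊤)
    (h1 : a₁ ^ 2 * ⁅a₁, a₂⁆⁻¹ ∈ γ 2) (h2 : a₂ ^ 2 * ⁅a₂, a₃⁆⁻¹ ∈ γ 2)
    (h3 : a₃ ^ 2 * ⁅a₁, a₃⁆⁻¹ ∈ γ 2) (g : G) : g ^ 2 ∈ γ 1 := by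
  have key : ∀ {x y z : G}, x ^ 2 * ⁅y, z⁆⁻¹ ∈ γ 2 → x ^ 2 ∈ γ 1 := fun {x y z} h => by
    rw [show x ^ 2 = x ^ 2 * ⁅y, z⁆⁻¹ * ⁅y, z⁆ by group]
    exact mul_mem (Subgroup.lowerCentralSeries_antitone _ (Nat.le_succ 1) h)
      (commutator_mem_commutator (mem_top y) (mem_top z))
  refine sq_mem_lcs_one_of_closure hs ?_ g
  rintro _ (rfl | rfl | rfl)
  exacts [key h1, key h2, key h3]

theorem lcs_one_le_of_relations (hG2 : ∀ g : G, g ^ 2 ∈ γ 1)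
    (hs : Subgroup.closure {a₁, a₂, a₃} = ⊤) (h1 : a₁ ^ 2 * ⁅a₁, a₂⁆⁻¹ ∈ γ 2)
    (h2 : a₂ ^ 2 * ⁅a₂, a₃⁆⁻¹ ∈ γ 2) (h3 : a₃ ^ 2 * ⁅a₁, a₃⁆⁻¹ ∈ γ 2) :
    γ 1 ≤ closurePowTwoPow {a₁, a₂, a₃} 1 ⊔ γ 2 := by
  have key : ∀ {x z : G}, x ∈ ({a₁, a₂, a₃} : Set G) → x ^ 2 * z⁻¹ ∈ γ 2 →
      z ∈ closurePowTwoPow {a₁, a₂, a₃} 1 ⊔ γ 2 := fun {x z} hx h => by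
    have hx2 := pow_two_pow_mem_closurePowTwoPow hx 1
    rw [pow_one] at hx2
    rw [show z = (x ^ 2 * z⁻¹)⁻¹ * x ^ 2 by group]
    exact mul_mem (inv_mem (mem_sup_right h)) (mem_sup_left hx2)
  have c12 := key (by simp) h1
  have c23 := key (by simp) h2
  have c13 := key (by simp) h3
  refine lcs_succ_le_of_commutator_mem hG2 hs
    (le_sup_of_le_left (by simpa [closurePowTwoPow] using hs.ge)) fun a ha b hb => ?_
  rw [pow_zero, pow_one]
  simp only [Set.mem_insert_iff, Set.mem_singleton_iff] at ha hb
  rcases ha with rfl | rfl | rfl <;> rcases hb with rfl | rfl | rfl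
  all_goals first
    | rw [commutatorElement_self]; exact one_mem _
    | assumption
    | rw [← commutatorElement_inv]; exact inv_mem ‹_›

theorem lcs_two_le_of_relations (hG2 : ∀ g : G, g ^ 2 ∈ γ 1)
    (hs : Subgroup.closure {a₁, a₂, a₃} = ⊤) (h1 : a₁ ^ 2 * ⁅a₁, a₂⁆⁻¹ ∈ γ 2)
    (h2 : a₂ ^ 2 * ⁅a₂, a₃⁆⁻¹ ∈ γ 2) (h3 : a₃ ^ 2 * ⁅a₁, a₃⁆⁻¹ ∈ γ 2)
    (hle : γ 1 ≤ closurePowTwoPow {a₁, a₂, a₃} 1 ⊔ γ 2) :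
    γ 2 ≤ closurePowTwoPow {a₁, a₂, a₃} 2 ⊔ γ 3 := by
  let K := closurePowTwoPow {a₁, a₂, a₃} 2 ⊔ γ 3
  have : K.Normal := closurePowTwoPow_sup_normal hG2 {a₁, a₂, a₃} 2
  have hX4 : ∀ x ∈ ({a₁, a₂, a₃} : Set G), (x : G ⧸ K) ^ 4 = 1 := fun x hx => by
    rw [← QuotientGroup.mk_pow, QuotientGroup.eq_one_iff]
    exact mem_sup_left (pow_two_pow_mem_closurePowTwoPow hx 2)
  obtain ⟨W₁, hW₁, hW₁2, e₁⟩ := exists_central_of_sq_mul_inv_mem hG2 (K := K) le_sup_right h1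
  obtain ⟨W₂, hW₂, hW₂2, e₂⟩ := exists_central_of_sq_mul_inv_mem hG2 (K := K) le_sup_right h2
  obtain ⟨W₃, hW₃, hW₃2, e₃⟩ := exists_central_of_sq_mul_inv_mem hG2 (K := K) le_sup_right h3
  rw [mk_commutatorElement] at e₁ e₂ e₃
  obtain ⟨c12, c21⟩ := commute_sq_of_commutator_eq hW₁ hW₁2 (hX4 _ (by simp)) e₁
  obtain ⟨c23, c32⟩ := commute_sq_of_commutator_eq hW₂ hW₂2 (hX4 _ (by simp)) e₂
  obtain ⟨c31, c13⟩ := commute_sq_of_commutator_eq' hW₃ hW₃2 (hX4 _ (by simp)) e₃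
  refine lcs_succ_le_of_commutator_mem hG2 hs hle fun a ha b hb => ?_
  rw [commutator_mem_iff_commute, QuotientGroup.mk_pow, pow_one]
  simp only [Set.mem_insert_iff, Set.mem_singleton_iff] at ha hb
  rcases ha with rfl | rfl | rfl <;> rcases hb with rfl | rfl | rfl
  all_goals first
    | assumption
    | exact (Commute.refl _).pow_left 2

end Relations

end LowerCentralPowers

open LowerCentralPowers

/-- **Proposition 11 (second part).** Let `G` be a finite 2-group generated by `a₁, a₂, a₃`
with `a₁² ≡ ⁅a₁,a₂⁆`, `a₂² ≡ ⁅a₂,a₃⁆`, `a₃² ≡ ⁅a₁,a₃⁆` modulo `G₃`. Then for every `j ≥ 2`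
the `j`-th term of the lower central series (which is `lowerCentralSeries G (j-1)` in
Mathlib's indexing) satisfies
`G_j = ⟨a₁^(2^(j-1)), a₂^(2^(j-1)), a₃^(2^(j-1))⟩ = (G₂)^(2^(j-2))`. -/
theorem stmt_3 (G : Type*) [Group G] [Finite G] (hG : IsPGroup 2 G)
    (a₁ a₂ a₃ : G) (hgen : Subgroup.closure {a₁, a₂, a₃} = ⊤)
    (h1 : a₁ ^ 2 * ⁅a₁, a₂⁆⁻¹ ∈ (⊤ : Subgroup G).lowerCentralSeries 2)
    (h2 : a₂ ^ 2 * ⁅a₂, a₃⁆⁻¹ ∈ (⊤ : Subgroup G).lowerCentralSeries 2)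
    (h3 : a₃ ^ 2 * ⁅a₁, a₃⁆⁻¹ ∈ (⊤ : Subgroup G).lowerCentralSeries 2) :
    ∀ j : ℕ, 2 ≤ j →
      (⊤ : Subgroup G).lowerCentralSeries (j - 1) =
        Subgroup.closure {a₁ ^ 2 ^ (j - 1), a₂ ^ 2 ^ (j - 1), a₃ ^ 2 ^ (j - 1)} ∧
      (⊤ : Subgroup G).lowerCentralSeries (j - 1) =
        Subgroup.closure ((fun x => x ^ 2 ^ (j - 2)) '' (commutator G : Set G)) := by
  intro j hj
  obtain ⟨k, rfl⟩ : ∃ k, j = k + 2 := ⟨j - 2, by omega⟩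
  rw [show k + 2 - 1 = k + 1 by omega, Nat.add_sub_cancel]
  have hG2 := sq_mem_lcs_one_of_relations hgen h1 h2 h3
  have := Fact.mk Nat.prime_two
  have := hG.isNilpotent
  have hle := lcs_one_le_of_relations hG2 hgen h1 h2 h3
  have heq := lcs_succ_eq_closurePowTwoPow hG2 hgen hle
    (lcs_two_le_of_relations hG2 hgen h1 h2 h3 hle) k
  refine ⟨?_, le_antisymm ?_ (closure_pow_le_lcs hG2 k)⟩
  · rw [heq, closurePowTwoPow, Set.image_insert_eq, Set.image_insert_eq, Set.image_singleton]
  · exact heq.le.trans (closurePowTwoPow_succ_le_closure_pow hG2 _ k)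
end

section
/- Let G be a group, let a, b ∈ G, and set c = [a,b]. If a²c⁻¹ ∈ G₃ (i.e. a² ≡ [a,b] modulo G₃), then [c,a] ∈ G₄ and [c,b] ≡ c² modulo G₄, where G₃ and G₄ denote the third and fourth terms of the lower central series of G. -/
open scoped commutatorElement

/-!
Modulo `G₄` every element of `G₃` is central, so in `G ⧸ G₄` the hypothesis reads `a² = z c`
with `z` central. Then `c = z⁻¹ a²` commutes with `a`, and
`⁅c, b⁆ = ⁅a², b⁆ = a c a⁻¹ c = c²`.
-/

open Subgroup

section

variable {G : Type*} [Group G]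

theorem commutatorElement_sq_left_s4 (a b : G) : ⁅a ^ 2, b⁆ = a * ⁅a, b⁆ * a⁻¹ * ⁅a, b⁆ := by
  simp only [commutatorElement_def, sq]
  group

theorem commutatorElement_central_mul_left {z : G} (hz : z ∈ center G) (x y : G) :
    ⁅z * x, y⁆ = ⁅x, y⁆ := by
  rw [commutatorElement_def, commutatorElement_def, mul_inv_rev,
    show z * x * y * (x⁻¹ * z⁻¹) = z * (x * y * x⁻¹) * z⁻¹ by group, ← mem_center_iff.mp hz,
    mul_inv_cancel_right]

theorem commute_commutatorElement_left_of_sq_eq_central_mul {a b z : G} (hz : z ∈ center G)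
    (h : a ^ 2 = z * ⁅a, b⁆) : Commute ⁅a, b⁆ a := by
  rw [show ⁅a, b⁆ = z⁻¹ * a ^ 2 by rw [h, inv_mul_cancel_left]]
  exact Commute.mul_left (mem_center_iff.mp (inv_mem hz) a).symm (Commute.self_pow a 2).symm

theorem commutatorElement_commutatorElement_right_of_sq_eq_central_mul {a b z : G}
    (hz : z ∈ center G) (h : a ^ 2 = z * ⁅a, b⁆) : ⁅⁅a, b⁆, b⁆ = ⁅a, b⁆ ^ 2 := by
  have hca := commute_commutatorElement_left_of_sq_eq_central_mul hz h
  calc ⁅⁅a, b⁆, b⁆ = ⁅z⁻¹ * a ^ 2, b⁆ := by rw [h, inv_mul_cancel_left]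
    _ = ⁅a ^ 2, b⁆ := commutatorElement_central_mul_left (inv_mem hz) _ _
    _ = a * ⁅a, b⁆ * a⁻¹ * ⁅a, b⁆ := commutatorElement_sq_left_s4 a b
    _ = ⁅a, b⁆ ^ 2 := by rw [hca.symm.eq, mul_inv_cancel_right, sq]

theorem mk'_mem_center_of_mem_lowerCentralSeries {n : ℕ} {x : G}
    (hx : x ∈ (⊤ : Subgroup G).lowerCentralSeries n) :
    QuotientGroup.mk' ((⊤ : Subgroup G).lowerCentralSeries (n + 1)) x ∈ center _ := by
  rw [mem_center_iff]
  intro y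
  induction y using QuotientGroup.induction_on with | H y => ?_
  refine (commutatorElement_eq_one_iff_mul_comm.mp ?_).symm
  rw [← QuotientGroup.mk'_apply, ← map_commutatorElement, ← MonoidHom.mem_ker, QuotientGroup.ker_mk']
  exact commutator_mem_commutator hx (mem_top y)

end

/-- Let `G` be a group, `a, b ∈ G` and `c = ⁅a,b⁆`. If `a²c⁻¹ ∈ G₃` (i.e. `a² ≡ ⁅a,b⁆` modulo
`G₃`), then `⁅c,a⁆ ∈ G₄` and `⁅c,b⁆ ≡ c²` modulo `G₄` (in Mathlib's indexing
`G₃ = lowerCentralSeries G 2` and `G₄ = lowerCentralSeries G 3`). -/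
theorem stmt_4 (G : Type*) [Group G] (a b c : G) (hc : c = ⁅a, b⁆)
    (h : a ^ 2 * c⁻¹ ∈ (⊤ : Subgroup G).lowerCentralSeries 2) :
    ⁅c, a⁆ ∈ (⊤ : Subgroup G).lowerCentralSeries 3 ∧ ⁅c, b⁆ * (c ^ 2)⁻¹ ∈ (⊤ : Subgroup G).lowerCentralSeries 3 := by
  set π := QuotientGroup.mk' ((⊤ : Subgroup G).lowerCentralSeries 3)
  have mem_of_map_eq_one : ∀ g, π g = 1 → g ∈ (⊤ : Subgroup G).lowerCentralSeries 3 :=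
    fun g hg => (QuotientGroup.eq_one_iff g).mp hg
  have hz : π (a ^ 2 * c⁻¹) ∈ center _ := mk'_mem_center_of_mem_lowerCentralSeries h
  have hsq : π a ^ 2 = π (a ^ 2 * c⁻¹) * ⁅π a, π b⁆ := by
    rw [← map_commutatorElement, ← hc, ← map_pow, ← map_mul, inv_mul_cancel_right]
  subst hc
  constructor
  · apply mem_of_map_eq_one
    rw [map_commutatorElement, map_commutatorElement, commutatorElement_eq_one_iff_commute]
    exact commute_commutatorElement_left_of_sq_eq_central_mul hz hsq
  · apply mem_of_map_eq_one
    rw [map_mul, map_inv, mul_inv_eq_one, map_commutatorElement, map_pow, map_commutatorElement]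
    exact commutatorElement_commutatorElement_right_of_sq_eq_central_mul hz hsq
end

section
/- Let p be a prime with p ≡ 3 (mod 4), and let ε > 1 be the fundamental unit of the real quadratic field ℚ(√(2p)) ⊆ ℝ. Then there exist integers a, b such that ε = 2a² + b²p + 2ab√(2p) (equivalently, √ε = a√2 + b√p), and moreover 2a² − b²p equals the Legendre symbol (2/p). -/
/-- `x` belongs to the real quadratic field `ℚ(√d) ⊆ ℝ`. -/
def memQuadField (d x : ℝ) : Prop := ∃ u v : ℚ, x = u + v * Real.sqrt d

/-- `x` is a unit of the ring of integers `𝓞` of `ℚ(√d) ⊆ ℝ`: it lies in `ℚ(√d)`, is a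
nonzero algebraic integer, and its inverse is also an algebraic integer. -/
def isQuadUnit (d x : ℝ) : Prop :=
  memQuadField d x ∧ IsIntegral ℤ x ∧ x ≠ 0 ∧ IsIntegral ℤ x⁻¹

/-- `ε` is a fundamental unit of `ℚ(√d) ⊆ ℝ`: it is a unit of the ring of integers and every
unit of the ring of integers equals `±εⁿ` for some integer `n`. -/
def isFundUnit (d ε : ℝ) : Prop :=
  isQuadUnit d ε ∧ ∀ x : ℝ, isQuadUnit d x → ∃ n : ℤ, x = ε ^ n ∨ x = -ε ^ n

/-!
Since `2p ≡ 2 (mod 4)`, the ring of integers of `ℚ(√(2p))` is `ℤ[√(2p)]`, so `ε = T + U√(2p)`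
with `T² - 2pU² = ±1`; the sign is `+1` because `-1` is not a square mod `p`, and `T, U > 0`
because `ε > 1`. Writing `T = 2s + 1`, `U = 2u` gives `s (s + 1) = 2pu²` with `s`, `s + 1`
coprime, so `s = d₁x²`, `s + 1 = d₂y²` with `d₁d₂ = 2p`, and `ε = (x√d₁ + y√d₂)²`.
If `{d₁, d₂} = {1, 2p}`, then `ε` is the square of a unit of `ℤ[√(2p)]`, impossible for a
fundamental unit; hence `{d₁, d₂} = {2, p}`. Finally `2a² - pb² = ±1` is `≡ 2a² (mod p)`,
and `(-1/p) = -1`, so it equals `(2/p)`.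
-/

open Polynomial

theorem isIntegral_sqrt_natCast (D : ℕ) : IsIntegral ℤ √(D : ℝ) :=
  ⟨X ^ 2 - C (D : ℤ), monic_X_pow_sub_C _ two_ne_zero, by simp [Real.sq_sqrt D.cast_nonneg]⟩

theorem exists_int_eq_of_isIntegral_ratCast {u : ℚ} (h : IsIntegral ℤ (u : ℝ)) :
    ∃ A : ℤ, (A : ℚ) = u :=
  IsIntegrallyClosed.isIntegral_iff.mp <|
    (isIntegral_algebraMap_iff (algebraMap ℚ ℝ).injective).mp h

theorem natCast_ne_mul_self_of_mod_four {D : ℕ} (hD4 : D % 4 = 2 ∨ D % 4 = 3) (n : ℤ) :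
    (D : ℤ) ≠ n * n := by
  rintro h
  rcases Int.even_or_odd n with ⟨k, rfl⟩ | ⟨k, rfl⟩ <;> ring_nf at h <;> omega

theorem irrational_sqrt_of_mod_four {D : ℕ} (hD4 : D % 4 = 2 ∨ D % 4 = 3) : Irrational √(D : ℝ) :=
  irrational_sqrt_natCast_iff.mpr fun ⟨r, hr⟩ =>
    natCast_ne_mul_self_of_mod_four hD4 r (by exact_mod_cast hr)

theorem exists_int_eq_two_mul_and_sq_sub_mul_sq {D : ℕ} (hD : Irrational √(D : ℝ)) {u v : ℚ}
    (hv : v ≠ 0) (h : IsIntegral ℤ ((u : ℝ) + v * √(D : ℝ))) :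
    ∃ t n : ℤ, (t : ℚ) = 2 * u ∧ (n : ℚ) = u ^ 2 - D * v ^ 2 := by
  set x : ℝ := u + v * √(D : ℝ)
  set q : ℚ[X] := X ^ 2 - C (2 * u) * X + C (u ^ 2 - D * v ^ 2)
  have hq : q.Monic := by
    unfold q; monicity!
  have hqdeg : q.natDegree = 2 := by
    unfold q; compute_degree!
  have hqx : aeval x q = 0 := by
    simp only [q, x, map_add, map_sub, map_mul, map_pow, aeval_X, aeval_C, eq_ratCast]
    push_cast
    linear_combination (v : ℝ) ^ 2 * Real.sq_sqrt D.cast_nonneg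
  have hx : x ∉ (algebraMap ℚ ℝ).range := by
    rintro ⟨r, hr⟩
    refine hD ⟨(r - u) / v, ?_⟩
    rw [eq_ratCast] at hr
    push_cast
    rw [div_eq_iff (by exact_mod_cast hv), hr]
    ring
  have hmin : minpoly ℚ x = q :=
    (eq_of_monic_of_dvd_of_natDegree_le (minpoly.monic h.tower_top) hq (minpoly.dvd ℚ x hqx)
      (hqdeg ▸ (minpoly.two_le_natDegree_iff h.tower_top).mpr hx)).symm
  have hcoeff (i : ℕ) : ∃ c : ℤ, (c : ℚ) = q.coeff i :=
    ⟨(minpoly ℤ x).coeff i, by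
      rw [← hmin, minpoly.isIntegrallyClosed_eq_field_fractions' ℚ h, coeff_map, eq_intCast]⟩
  obtain ⟨t, ht⟩ := hcoeff 1
  obtain ⟨n, hn⟩ := hcoeff 0
  refine ⟨-t, n, ?_, ?_⟩
  · rw [Int.cast_neg, ht]
    simp only [q, coeff_add, coeff_sub, coeff_C_mul, coeff_X_pow, coeff_X, coeff_C]
    norm_num
  · simp only [hn, q, coeff_add, coeff_sub, coeff_C_mul, coeff_X_pow, coeff_X, coeff_C]
    norm_num

theorem Rat.exists_int_eq_of_squarefree_mul_sq {D : ℕ} (hD : Squarefree D) {w : ℚ} {m : ℤ}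
    (h : D * w ^ 2 = m) : ∃ B : ℤ, (B : ℚ) = w := by
  have hw : w ^ 2 = (m : ℚ) / ((D : ℤ) : ℚ) := by
    rw [eq_div_iff (by exact_mod_cast hD.ne_zero), ← h]
    push_cast
    ring
  have hden : ((w ^ 2).den : ℤ) ∣ D := by
    rw [hw, ← Rat.divInt_eq_div]
    exact Rat.den_dvd _ _
  rw [Rat.den_pow, sq] at hden
  exact ⟨w.num, Rat.coe_int_num_of_den_eq_one (Nat.isUnit_iff.mp (hD _ (by exact_mod_cast hden)))⟩

theorem Int.even_and_even_of_sq_sub_mul_sq_eq_four_mul {D : ℕ} (hD4 : D % 4 = 2 ∨ D % 4 = 3)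
    {a b n : ℤ} (h : a ^ 2 - D * b ^ 2 = 4 * n) : Even a ∧ Even b := by
  have hD : (D : ℤ) = 4 * (D / 4 : ℕ) + (D % 4 : ℕ) := by exact_mod_cast (Nat.div_add_mod D 4).symm
  rw [hD] at h
  rcases Int.even_or_odd a with ⟨k, rfl⟩ | ⟨k, rfl⟩ <;>
  rcases Int.even_or_odd b with ⟨l, rfl⟩ | ⟨l, rfl⟩ <;>
  rcases hD4 with hD4 | hD4 <;> rw [hD4] at h <;> push_cast at h <;> ring_nf at h <;>
  first | exact ⟨⟨k, rfl⟩, ⟨l, rfl⟩⟩ | omega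

theorem exists_int_eq_of_isIntegral_add_mul_sqrt {D : ℕ} (hD : Squarefree D)
    (hD4 : D % 4 = 2 ∨ D % 4 = 3) {u v : ℚ}
    (h : IsIntegral ℤ ((u : ℝ) + v * √(D : ℝ))) : ∃ A B : ℤ, (A : ℚ) = u ∧ (B : ℚ) = v := by
  rcases eq_or_ne v 0 with rfl | hv
  · obtain ⟨A, hA⟩ := exists_int_eq_of_isIntegral_ratCast (u := u) (by simpa using h)
    exact ⟨A, 0, hA, by simp⟩
  obtain ⟨t, n, ht, hn⟩ := exists_int_eq_two_mul_and_sq_sub_mul_sq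
    (irrational_sqrt_of_mod_four hD4) hv h
  obtain ⟨s, hs⟩ := Rat.exists_int_eq_of_squarefree_mul_sq hD (w := 2 * v) (m := t ^ 2 - 4 * n)
    (by push_cast; rw [ht, hn]; ring)
  obtain ⟨⟨a, rfl⟩, ⟨b, rfl⟩⟩ := Int.even_and_even_of_sq_sub_mul_sq_eq_four_mul hD4
    (a := t) (b := s) (n := n) (by qify; rw [ht, hn, hs]; ring)
  exact ⟨a, b, by push_cast at ht; linarith, by push_cast at hs; linarith⟩

theorem isQuadUnit.exists_eq_add_mul_sqrt_isUnit_norm {D : ℕ} (hD : Squarefree D)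
    (hD4 : D % 4 = 2 ∨ D % 4 = 3) {x : ℝ} (hx : isQuadUnit D x) :
    ∃ T U : ℤ, x = T + U * √(D : ℝ) ∧ IsUnit (T ^ 2 - D * U ^ 2) := by
  obtain ⟨⟨u, v, rfl⟩, hint, hne, hinvint⟩ := hx
  obtain ⟨T, U, rfl, rfl⟩ := exists_int_eq_of_isIntegral_add_mul_sqrt hD hD4 hint
  refine ⟨T, U, by push_cast; rfl, ?_⟩
  obtain ⟨N, hNdef⟩ : ∃ N, T ^ 2 - D * U ^ 2 = N := ⟨_, rfl⟩
  rw [hNdef]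
  have hN : N ≠ 0 := by
    intro h0
    have : (⟨T, U⟩ : ℤ√(D : ℤ)) = 0 :=
      (Zsqrtd.norm_eq_zero (natCast_ne_mul_self_of_mod_four hD4) _).mp (by
        rw [Zsqrtd.norm_def]; linear_combination hNdef + h0)
    obtain ⟨rfl, rfl⟩ : T = 0 ∧ U = 0 := by simpa [Zsqrtd.ext_iff] using this
    simp at hne
  have hinv : (((T : ℚ) : ℝ) + ((U : ℚ) : ℝ) * √(D : ℝ))⁻¹ =
      ((T / N : ℚ) : ℝ) + ((-U / N : ℚ) : ℝ) * √(D : ℝ) := by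
    have hNR : (N : ℝ) ≠ 0 := by exact_mod_cast hN
    have hNR' : (T : ℝ) ^ 2 - D * U ^ 2 = N := by exact_mod_cast hNdef
    refine inv_eq_of_mul_eq_one_right ?_
    push_cast
    field_simp
    linear_combination (-(U : ℝ) ^ 2) * Real.sq_sqrt D.cast_nonneg + hNR'
  obtain ⟨T', U', hT', hU'⟩ := exists_int_eq_of_isIntegral_add_mul_sqrt hD hD4 (hinv ▸ hinvint)
  have hNQ : (N : ℚ) ≠ 0 := by exact_mod_cast hN
  rw [eq_div_iff hNQ] at hT' hU'
  have hT : T' * N = T := by exact_mod_cast hT'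
  have hU : U' * N = -U := by exact_mod_cast hU'
  -- `T = T'N` and `U = -U'N` turn `T² - DU² = N` into `N = N² (T'² - DU'²)`.
  refine IsUnit.of_mul_eq_one (T' ^ 2 - D * U' ^ 2) (mul_left_cancel₀ hN ?_)
  linear_combination (T' * N + T) * hT - (D : ℤ) * (U' * N - U) * hU + hNdef

theorem Int.sq_sub_mul_sq_ne_neg_one_of_dvd {p : ℕ} [Fact p.Prime] (hp4 : p % 4 = 3) {D : ℕ}
    (hpD : p ∣ D) (T U : ℤ) : T ^ 2 - D * U ^ 2 ≠ -1 := by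
  intro h
  have hT : (T : ZMod p) ^ 2 = -1 := by
    have := congrArg (Int.cast : ℤ → ZMod p) h
    push_cast [(ZMod.natCast_eq_zero_iff D p).mpr hpD] at this
    simpa using this
  exact ZMod.exists_sq_eq_neg_one_iff.mp ⟨T, by rw [← hT, sq]⟩ hp4

theorem pos_and_pos_of_one_lt_add_mul_sqrt {D : ℕ} {T U : ℤ} (hN : T ^ 2 - D * U ^ 2 = 1)
    (h : 1 < T + U * √(D : ℝ)) : 0 < T ∧ 0 < U := by
  have hs := Real.sq_sqrt D.cast_nonneg
  have hs0 := Real.sqrt_nonneg (D : ℝ)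
  have hNR : ((T : ℝ) + U * √(D : ℝ)) * (T - U * √(D : ℝ)) = 1 := by
    linear_combination (by exact_mod_cast hN : (T : ℝ) ^ 2 - D * U ^ 2 = 1) - (U : ℝ) ^ 2 * hs
  have hconj : 0 < (T : ℝ) - U * √(D : ℝ) := by nlinarith
  have hconj' : (T : ℝ) - U * √(D : ℝ) < 1 := by nlinarith
  constructor
  · exact_mod_cast (by linarith : (0 : ℝ) < T)
  · have : (0 : ℝ) < U * √(D : ℝ) := by linarith
    exact_mod_cast pos_of_mul_pos_left this hs0

theorem isFundUnit.sq_ne {d ε η : ℝ} (hfund : isFundUnit d ε) (hε : 1 < ε)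
    (hη : memQuadField d η) (hηint : IsIntegral ℤ η) : η ^ 2 ≠ ε := by
  intro h
  have hε0 : 0 < ε := by linarith
  have hη0 : η ≠ 0 := by rintro rfl; simp [← h] at hε0
  have hηinv : η⁻¹ = η * ε⁻¹ := by
    rw [← h]; field_simp
  obtain ⟨n, hn | hn⟩ := hfund.2 η ⟨hη, hηint, hη0, hηinv ▸ hηint.mul hfund.1.2.2.2⟩ <;>
  · have hsq : ε = (ε ^ n) ^ 2 := by
      calc ε = η ^ 2 := h.symm
        _ = (ε ^ n) ^ 2 := by simp only [hn, neg_sq]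
    have : ε ^ (1 : ℤ) = ε ^ (n * 2) := by
      rw [zpow_one, zpow_mul, zpow_two, ← sq, ← hsq]
    have := zpow_right_injective₀ hε0 hε.ne' this
    omega

theorem Nat.Coprime.exists_eq_mul_sq_of_mul_eq {a b n c : ℕ} (hab : a.Coprime b) (hn : n ≠ 0)
    (h : a * b = n * c ^ 2) :
    ∃ d₁ d₂ x y : ℕ, d₁ * d₂ = n ∧ a = d₁ * x ^ 2 ∧ b = d₂ * y ^ 2 := by
  have hd : n.gcd a * n.gcd b = n :=
    (Nat.Coprime.gcd_mul n hab).symm.trans (Nat.gcd_eq_left (h ▸ Dvd.intro _ rfl))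
  obtain ⟨a', ha'⟩ := Nat.gcd_dvd_right n a
  obtain ⟨b', hb'⟩ := Nat.gcd_dvd_right n b
  have hcop : a'.Coprime b' :=
    (hab.coprime_dvd_left (Dvd.intro_left _ ha'.symm)).coprime_dvd_right
      (Dvd.intro_left _ hb'.symm)
  generalize n.gcd a = d₁ at hd ha'
  generalize n.gcd b = d₂ at hd hb'
  subst hd ha' hb'
  have hab' : a' * b' = c ^ 2 :=
    Nat.eq_of_mul_eq_mul_left (Nat.pos_of_ne_zero hn) (by rw [← h]; ring)
  obtain ⟨x, rfl⟩ := exists_eq_pow_of_mul_eq_pow (Nat.isUnit_iff.mpr hcop) hab'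
  obtain ⟨y, rfl⟩ := exists_eq_pow_of_mul_eq_pow (Nat.isUnit_iff.mpr hcop.symm)
    ((mul_comm _ _).trans hab')
  exact ⟨d₁, d₂, x, y, rfl, rfl, rfl⟩

theorem Nat.eq_of_mul_eq_prime_mul_prime {q p d₁ d₂ : ℕ} (hq : q.Prime) (hp : p.Prime)
    (h : d₁ * d₂ = q * p) :
    d₁ = 1 ∧ d₂ = q * p ∨ d₁ = q ∧ d₂ = p ∨ d₁ = p ∧ d₂ = q ∨ d₁ = q * p ∧ d₂ = 1 := by
  obtain ⟨k₁, k₂, hk₁, hk₂, rfl⟩ := Nat.dvd_mul.mp (Dvd.intro d₂ h)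
  have hq0 := hq.pos
  have hp0 := hp.pos
  rcases hq.eq_one_or_self_of_dvd k₁ hk₁ with rfl | rfl <;>
  rcases hp.eq_one_or_self_of_dvd k₂ hk₂ with rfl | rfl
  · simp_all
  · right; right; left
    refine ⟨by ring, Nat.eq_of_mul_eq_mul_left hp0 ?_⟩
    linarith
  · right; left
    refine ⟨by ring, Nat.eq_of_mul_eq_mul_left hq0 ?_⟩
    linarith
  · right; right; right
    exact ⟨by ring, Nat.eq_of_mul_eq_mul_left (Nat.mul_pos hq0 hp0) (by linarith)⟩

theorem exists_eq_of_sq_eq_two_mul_prime_mul_sq_add_one {p T U : ℕ} (hp : p.Prime) (hp2 : p ≠ 2)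
    (h : T ^ 2 = 2 * p * U ^ 2 + 1) :
    ∃ x y : ℕ, U = 2 * x * y ∧ (T = x ^ 2 + 2 * p * y ^ 2 ∨ T = 2 * x ^ 2 + p * y ^ 2) := by
  obtain ⟨s, rfl⟩ : ∃ s, T = 2 * s + 1 := by
    rcases Nat.even_or_odd T with ⟨k, rfl⟩ | ⟨s, rfl⟩
    · ring_nf at h; omega
    · exact ⟨s, rfl⟩
  obtain ⟨u, rfl⟩ : ∃ u, U = 2 * u := by
    rcases Nat.even_or_odd U with ⟨u, rfl⟩ | ⟨k, rfl⟩
    · exact ⟨u, by ring⟩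
    · obtain ⟨m, rfl⟩ := hp.odd_of_ne_two hp2
      ring_nf at h
      omega
  have hs : s * (s + 1) = 2 * p * u ^ 2 := by nlinarith
  obtain ⟨d₁, d₂, x, y, hd, rfl, hs1⟩ :=
    (Nat.coprime_self_add_right.mpr (Nat.coprime_one_right s)).exists_eq_mul_sq_of_mul_eq
      (Nat.mul_ne_zero two_ne_zero hp.ne_zero) hs
  obtain rfl : u = x * y := by
    refine (Nat.pow_left_injective two_ne_zero (Nat.eq_of_mul_eq_mul_left
      (Nat.mul_pos two_pos hp.pos) ?_)).symm
    rw [← hs, ← hd, hs1]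
    ring
  rcases Nat.eq_of_mul_eq_prime_mul_prime Nat.prime_two hp hd with
    ⟨rfl, rfl⟩ | ⟨rfl, rfl⟩ | ⟨rfl, rfl⟩ | ⟨rfl, rfl⟩
  · exact ⟨x, y, by ring, Or.inl (by linarith)⟩
  · exact ⟨x, y, by ring, Or.inr (by linarith)⟩
  · exact ⟨y, x, by ring, Or.inr (by linarith)⟩
  · exact ⟨y, x, by ring, Or.inl (by linarith)⟩

theorem legendreSym_two_eq_of_sq_eq_one {p : ℕ} [Fact p.Prime] (hp4 : p % 4 = 3) {a b : ℤ}
    (h : (2 * a ^ 2 - b ^ 2 * p) ^ 2 = 1) : 2 * a ^ 2 - b ^ 2 * p = legendreSym p 2 := by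
  have ha : (a : ZMod p) ≠ 0 := by
    intro ha
    have := congrArg (Int.cast : ℤ → ZMod p) h
    push_cast [ha, ZMod.natCast_self] at this
    norm_num at this
  have hmod : legendreSym p 2 = legendreSym p (2 * a ^ 2 - b ^ 2 * p) := by
    rw [legendreSym.mod p (2 * a ^ 2 - b ^ 2 * p), Int.sub_mul_emod_self_right, ← legendreSym.mod,
      legendreSym.mul, legendreSym.sq_one' p ha, mul_one]
  rw [hmod]
  rcases sq_eq_one_iff.mp h with h1 | h1 <;> rw [h1]
  · exact (legendreSym.at_one p).symm
  · rw [legendreSym.at_neg_one (by omega), ZMod.χ₄_nat_three_mod_four hp4]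

/-- **Lemma 6 (ii).** Let `p` be a prime `≡ 3 (mod 4)` and `ε > 1` the fundamental unit of
`ℚ(√(2p))`. Then `√ε = a√2 + b√p` for some integers `a, b`, i.e.
`ε = 2a² + b²p + 2ab√(2p)`, and `2a² − b²p = (2/p)`. -/
theorem stmt_8 (p : ℕ) [hp : Fact p.Prime] (hp4 : p % 4 = 3)
    (ε : ℝ) (hε : 1 < ε) (hfund : isFundUnit (2 * (p : ℝ)) ε) :
    ∃ a b : ℤ,
      ε = 2 * (a : ℝ) ^ 2 + (b : ℝ) ^ 2 * p + 2 * a * b * Real.sqrt (2 * (p : ℝ)) ∧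
      2 * a ^ 2 - b ^ 2 * (p : ℤ) = legendreSym p 2 := by
  have hcast : ((2 * p : ℕ) : ℝ) = 2 * p := by push_cast; rfl
  have hsf : Squarefree (2 * p) :=
    (Nat.squarefree_mul ((Nat.coprime_primes Nat.prime_two hp.out).mpr (by omega))).mpr
      ⟨Nat.prime_two.squarefree, hp.out.squarefree⟩
  obtain ⟨T, U, hεTU, hN⟩ := (hcast ▸ hfund.1 : isQuadUnit ((2 * p : ℕ) : ℝ) ε)
    |>.exists_eq_add_mul_sqrt_isUnit_norm hsf (.inl (by omega))
  have hN1 : T ^ 2 - (2 * p : ℕ) * U ^ 2 = 1 := (Int.isUnit_iff.mp hN).resolve_right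
    (Int.sq_sub_mul_sq_ne_neg_one_of_dvd hp4 (Dvd.intro_left 2 rfl) T U)
  obtain ⟨hT, hU⟩ := pos_and_pos_of_one_lt_add_mul_sqrt hN1 (hεTU ▸ hε)
  rw [hcast] at hεTU
  lift T to ℕ using hT.le
  lift U to ℕ using hU.le
  obtain ⟨x, y, rfl, rfl | rfl⟩ :=
    exists_eq_of_sq_eq_two_mul_prime_mul_sq_add_one hp.out (by omega)
      (show T ^ 2 = 2 * p * U ^ 2 + 1 by push_cast at hN1; zify; linarith)
  · have hint : IsIntegral ℤ ((x : ℝ) + y * √(2 * p)) :=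
      (isIntegral_natCast x).add ((isIntegral_natCast y).mul (hcast ▸ isIntegral_sqrt_natCast _))
    refine absurd ?_ (hfund.sq_ne hε ⟨x, y, by push_cast; rfl⟩ hint)
    rw [hεTU]
    push_cast
    linear_combination (y : ℝ) ^ 2 * Real.sq_sqrt (by positivity : (0 : ℝ) ≤ 2 * p)
  · refine ⟨x, y, by rw [hεTU]; push_cast; ring, legendreSym_two_eq_of_sq_eq_one hp4 ?_⟩
    push_cast at hN1
    linear_combination hN1
end
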